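/- arXiv:1202.2460 — 4 statements merged into one kernel-verified Lean document; each statement's English description precedes it below -/
import Mathlib

section
/- Let X be a finite set with |X| ≥ 2. A cluster system C for X is an ample saturated patchwork that contains C_triv if and only if there exists a (necessarily unique) hierarchy H on X containing C_triv — namely H = C* — such that C is the disjoint union of {X} and the sets ⟨Max(H:A)⟩ := {⋃M : ∅ ≠ M ⊊ Max(H:A)}, where A ranges over all clusters in H of cardinality at least 2. In particular, in this case |C| = 1 + Σ_{A ∈ C*, |A| > 1} (2^{|Max(C*:A)|} − 2). -/
/-!
For a hierarchy `H` containing the trivial clusters, `Max(H:A)` partitions `A` when `|A| ≥ 2`,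
and the unions of its members are exactly the subsets of `A` that contain or miss each member.
That description is closed under `∪`, `∩` and `\`, which makes
`C = {X} ∪ ⋃_A ⟨Max(H:A)⟩` a saturated patchwork, and ample since a Hasse arc of `C` always
sits below a single `A`. A set compatible with all of `C` equals the smallest member `B` of `H`
containing it: otherwise it would be a union of some but not all members of `Max(H:B)`, and
then incompatible with a member of `C`. Hence `C* = H`.

Conversely, for an ample saturated patchwork `C` on `U`, two distinct maximal members of
`C - {U}` cover `U`, so their complements are disjoint; these complements lie in `C` by
ampleness, cover `U`, all their unions lie in `C` by saturation, and every other member of `C`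
is such a union or lies inside one of them. Induction on `|U|`, applied to `C` restricted to each complement,
produces hierarchies that glue together with `U` into `H`. The count holds because a
subfamily of a partition is determined by its union.
-/

/-- Two subsets `A`, `B` are compatible if `A ∩ B ∈ {∅, A, B}`. -/
def Compatible {α : Type*} [DecidableEq α] (A B : Finset α) : Prop :=
  A ∩ B = ∅ ∨ A ∩ B = A ∨ A ∩ B = B

instance {α : Type*} [DecidableEq α] (A B : Finset α) : Decidable (Compatible A B) := by
  unfold Compatible; infer_instance

/-- A cluster system: a collection of non-empty subsets of `X`. -/
def IsCSF {α : Type*} [DecidableEq α] (C : Finset (Finset α)) : Prop :=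
  ∀ A ∈ C, A.Nonempty

/-- A hierarchy: a cluster system whose members are pairwise compatible. -/
def IsHierarchyF {α : Type*} [DecidableEq α] (C : Finset (Finset α)) : Prop :=
  IsCSF C ∧ ∀ A ∈ C, ∀ B ∈ C, Compatible A B

/-- A saturated patchwork. -/
def IsSatPWF {α : Type*} [DecidableEq α] (C : Finset (Finset α)) : Prop :=
  ∀ A ∈ C, ∀ B ∈ C, ¬Compatible A B →
    A ∩ B ∈ C ∧ A ∪ B ∈ C ∧ A \ B ∈ C ∧ B \ A ∈ C ∧ (A ∪ B) \ (A ∩ B) ∈ C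

/-- `C` is ample: for every Hasse arc `(C₂, C₁)`, `C₁ - C₂ ∈ C`. -/
def IsAmpleF {α : Type*} [DecidableEq α] (C : Finset (Finset α)) : Prop :=
  ∀ C₁ ∈ C, ∀ C₂ ∈ C, C₂ ⊂ C₁ → (∀ B ∈ C, ¬(C₂ ⊂ B ∧ B ⊂ C₁)) → C₁ \ C₂ ∈ C

/-- The trivial cluster system: all singletons together with `X` itself. -/
def CtrivF (α : Type*) [Fintype α] [DecidableEq α] : Finset (Finset α) :=
  (Finset.univ.image fun x : α => ({x} : Finset α)) ∪ {Finset.univ}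

/-- The adjoint `C*`. -/
def adjF {α : Type*} [Fintype α] [DecidableEq α] (C : Finset (Finset α)) :
    Finset (Finset α) :=
  Finset.univ.filter (fun A => A.Nonempty ∧ ∀ B ∈ C, Compatible A B)

/-- `Max(H:A)`: maximal elements of `{B ∈ H : B ⊆ A} - {A}`. -/
def MaxBelowF {α : Type*} [DecidableEq α] (H : Finset (Finset α)) (A : Finset α) :
    Finset (Finset α) :=
  H.filter (fun B => B ⊆ A ∧ B ≠ A ∧ ∀ B' ∈ H, B' ⊆ A → B' ≠ A → B ⊆ B' → B = B')

/-- `⟨Max(H:A)⟩ = {⋃M : ∅ ≠ M ⊊ Max(H:A)}`. -/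
def genF {α : Type*} [DecidableEq α] (H : Finset (Finset α)) (A : Finset α) :
    Finset (Finset α) :=
  ((MaxBelowF H A).powerset.filter
    (fun M => M.Nonempty ∧ M ≠ MaxBelowF H A)).image (fun M => M.sup id)

section ClusterSystems

open Finset

variable {α : Type*}

lemma two_le_card_of_ssubset {A B : Finset α} (hB : B.Nonempty) (h : B ⊂ A) : 2 ≤ A.card := by
  have := card_lt_card h
  have := hB.card_pos
  omega

variable [DecidableEq α]

section Compatibility

lemma compatible_iff {A B : Finset α} : Compatible A B ↔ Disjoint A B ∨ A ⊆ B ∨ B ⊆ A := by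
  rw [Compatible, disjoint_iff_inter_eq_empty, inter_eq_left, inter_eq_right]

lemma compatible_comm {A B : Finset α} : Compatible A B ↔ Compatible B A := by
  rw [compatible_iff, compatible_iff, disjoint_comm]; tauto

lemma compatible_of_subset {A B : Finset α} (h : A ⊆ B) : Compatible A B :=
  compatible_iff.2 (Or.inr (Or.inl h))

lemma compatible_of_superset {A B : Finset α} (h : B ⊆ A) : Compatible A B :=
  compatible_iff.2 (Or.inr (Or.inr h))

lemma compatible_of_disjoint {A B : Finset α} (h : Disjoint A B) : Compatible A B :=
  compatible_iff.2 (Or.inl h)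

lemma not_compatible_iff {A B : Finset α} :
    ¬Compatible A B ↔ (A ∩ B).Nonempty ∧ ¬A ⊆ B ∧ ¬B ⊆ A := by
  rw [compatible_iff, ← not_disjoint_iff_nonempty_inter]; tauto

end Compatibility

section Partition

variable {Pts M M' : Finset (Finset α)}

lemma eq_sup_filter_of_subset_or_disjoint {X : Finset α} (hX : X ⊆ Pts.sup id)
    (h : ∀ P ∈ Pts, P ⊆ X ∨ Disjoint P X) : X = (Pts.filter (· ⊆ X)).sup id := by
  refine Subset.antisymm (fun x hx => ?_) (Finset.sup_le fun P hP => (mem_filter.1 hP).2)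
  obtain ⟨P, hP, hxP⟩ := mem_sup.1 (hX hx)
  rcases h P hP with hPX | hPX
  · exact mem_sup.2 ⟨P, mem_filter.2 ⟨hP, hPX⟩, hxP⟩
  · exact absurd hx (disjoint_left.1 hPX hxP)

lemma two_le_card_of_sup_id_eq {A : Finset α} (hsup : Pts.sup id = A) (hA : A.Nonempty)
    (hne : ∀ P ∈ Pts, P ≠ A) : 2 ≤ Pts.card := by
  by_contra hlt
  obtain ⟨P, hP⟩ := (card_le_one_iff_subset_singleton (s := Pts)).1 (by omega)
  rcases subset_singleton_iff.1 hP with h | h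
  · rw [h, sup_empty] at hsup
    exact hA.ne_empty hsup.symm
  · rw [h, sup_singleton] at hsup
    exact hne P (h ▸ mem_singleton_self P) hsup

variable (hdisj : (Pts : Set (Finset α)).PairwiseDisjoint id)
include hdisj

lemma disjoint_sup_id_of_notMem (hM : M ⊆ Pts) {P : Finset α} (hP : P ∈ Pts) (hPM : P ∉ M) :
    Disjoint P (M.sup id) :=
  Finset.disjoint_sup_right.2 fun _ hQ => hdisj hP (hM hQ) (ne_of_mem_of_not_mem hQ hPM).symm

lemma mem_of_subset_sup_id (hM : M ⊆ Pts) {P : Finset α} (hP : P ∈ Pts) (hPne : P.Nonempty)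
    (hPM : P ⊆ M.sup id) : P ∈ M := by
  by_contra h
  exact hPne.ne_empty (disjoint_self.1 ((disjoint_sup_id_of_notMem hdisj hM hP h).mono_right hPM))

lemma sup_id_injOn (hne : ∀ P ∈ Pts, P.Nonempty) (hM : M ⊆ Pts) (hM' : M' ⊆ Pts)
    (h : M.sup id = M'.sup id) : M = M' := by
  have key : ∀ {N N' : Finset (Finset α)}, N ⊆ Pts → N' ⊆ Pts → N.sup id = N'.sup id →
      N ⊆ N' := fun hN hN' h P hP =>
    mem_of_subset_sup_id hdisj hN' (hN hP) (hne P (hN hP)) (h ▸ le_sup (f := id) hP)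
  exact Subset.antisymm (key hM hM' h) (key hM' hM h.symm)

end Partition

section MaxBelow

variable {H H' : Finset (Finset α)} {A B P X Y : Finset α}

lemma mem_maxBelowF_iff_maximal :
    P ∈ MaxBelowF H A ↔ Maximal (· ∈ H.filter (· ⊂ A)) P := by
  simp only [MaxBelowF, Maximal, mem_filter, ssubset_iff_subset_ne, and_imp]
  constructor
  · rintro ⟨hP, hPA, hPne, hmax⟩
    exact ⟨⟨hP, hPA, hPne⟩, fun B hB hBA hBne hPB => (hmax B hB hBA hBne hPB).symm ▸ subset_rfl⟩
  · rintro ⟨⟨hP, hPA, hPne⟩, hmax⟩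
    exact ⟨hP, hPA, hPne, fun B hB hBA hBne hPB => Subset.antisymm hPB (hmax hB hBA hBne hPB)⟩

lemma maxBelowF_subset : MaxBelowF H A ⊆ H := filter_subset _ _

lemma ssubset_of_mem_maxBelowF (hP : P ∈ MaxBelowF H A) : P ⊂ A :=
  (mem_filter.1 (mem_maxBelowF_iff_maximal.1 hP).1).2

lemma exists_mem_maxBelowF_superset (hB : B ∈ H) (hBA : B ⊂ A) :
    ∃ P ∈ MaxBelowF H A, B ⊆ P := by
  obtain ⟨P, hBP, hP⟩ := (H.filter (· ⊂ A)).exists_le_maximal (mem_filter.2 ⟨hB, hBA⟩)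
  exact ⟨P, mem_maxBelowF_iff_maximal.2 hP, hBP⟩

lemma maxBelowF_congr (h : ∀ B ⊆ A, B ∈ H ↔ B ∈ H') : MaxBelowF H A = MaxBelowF H' A := by
  ext P
  simp only [MaxBelowF, mem_filter]
  constructor
  · rintro ⟨hP, hPA, hPne, hmax⟩
    exact ⟨(h P hPA).1 hP, hPA, hPne, fun B hB hBA => hmax B ((h B hBA).2 hB) hBA⟩
  · rintro ⟨hP, hPA, hPne, hmax⟩
    exact ⟨(h P hPA).2 hP, hPA, hPne, fun B hB hBA => hmax B ((h B hBA).1 hB) hBA⟩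

lemma genF_congr (h : ∀ B ⊆ A, B ∈ H ↔ B ∈ H') : genF H A = genF H' A := by
  rw [genF, genF, maxBelowF_congr h]

lemma mem_genF_iff {S : Finset α} :
    S ∈ genF H A ↔ ∃ M ⊆ MaxBelowF H A, M.Nonempty ∧ M ≠ MaxBelowF H A ∧ M.sup id = S := by
  simp only [genF, mem_image, mem_filter, mem_powerset, and_assoc]

lemma pairwiseDisjoint_maxBelowF (hcomp : ∀ A ∈ H, ∀ B ∈ H, Compatible A B) :
    (MaxBelowF H A : Set (Finset α)).PairwiseDisjoint id := by
  intro P hP Q hQ hPQ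
  have hP' := mem_maxBelowF_iff_maximal.1 hP
  have hQ' := mem_maxBelowF_iff_maximal.1 hQ
  rcases compatible_iff.1 (hcomp P (maxBelowF_subset hP) Q (maxBelowF_subset hQ)) with h | h | h
  · exact h
  · exact absurd (Subset.antisymm h (hP'.2 hQ'.1 h)) hPQ
  · exact absurd (Subset.antisymm (hQ'.2 hP'.1 h) h) hPQ

/-- `X` is a union of members of `Max(H:A)`, phrased so that closure under `∪`, `∩` and `\`
is immediate. -/
def IsMaxBelowUnion (H : Finset (Finset α)) (A X : Finset α) : Prop :=
  X ⊆ A ∧ ∀ P ∈ MaxBelowF H A, P ⊆ X ∨ Disjoint P X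

namespace IsMaxBelowUnion

lemma union (hX : IsMaxBelowUnion H A X) (hY : IsMaxBelowUnion H A Y) :
    IsMaxBelowUnion H A (X ∪ Y) := by
  refine ⟨union_subset hX.1 hY.1, fun P hP => ?_⟩
  rcases hX.2 P hP with h | h
  · exact Or.inl (h.trans subset_union_left)
  rcases hY.2 P hP with h' | h'
  · exact Or.inl (h'.trans subset_union_right)
  · exact Or.inr (disjoint_union_right.2 ⟨h, h'⟩)

lemma inter (hX : IsMaxBelowUnion H A X) (hY : IsMaxBelowUnion H A Y) :
    IsMaxBelowUnion H A (X ∩ Y) := by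
  refine ⟨inter_subset_left.trans hX.1, fun P hP => ?_⟩
  rcases hX.2 P hP with h | h
  · rcases hY.2 P hP with h' | h'
    · exact Or.inl (subset_inter h h')
    · exact Or.inr (h'.mono_right inter_subset_right)
  · exact Or.inr (h.mono_right inter_subset_left)

lemma sdiff (hX : IsMaxBelowUnion H A X) (hY : IsMaxBelowUnion H A Y) :
    IsMaxBelowUnion H A (X \ Y) := by
  refine ⟨sdiff_subset.trans hX.1, fun P hP => ?_⟩
  rcases hX.2 P hP with h | h
  · rcases hY.2 P hP with h' | h'
    · exact Or.inr (disjoint_of_subset_left h' disjoint_sdiff)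
    · exact Or.inl (subset_sdiff.2 ⟨h, h'⟩)
  · exact Or.inr (h.mono_right sdiff_subset)

lemma eq_of_subset (hX : IsMaxBelowUnion H A X) (hXne : X.Nonempty) (hP : P ∈ MaxBelowF H A)
    (hXP : X ⊆ P) : X = P := by
  rcases hX.2 P hP with h | h
  · exact Subset.antisymm hXP h
  · exact absurd (disjoint_self.1 (h.mono_left hXP)) hXne.ne_empty

end IsMaxBelowUnion

variable (hcomp : ∀ A ∈ H, ∀ B ∈ H, Compatible A B)
include hcomp

lemma isMaxBelowUnion_sup {M : Finset (Finset α)} (hM : M ⊆ MaxBelowF H A) :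
    IsMaxBelowUnion H A (M.sup id) := by
  refine ⟨Finset.sup_le fun P hP => (ssubset_of_mem_maxBelowF (hM hP)).subset, fun P hP => ?_⟩
  by_cases hPM : P ∈ M
  · exact Or.inl (le_sup (f := id) hPM)
  · exact Or.inr (disjoint_sup_id_of_notMem (pairwiseDisjoint_maxBelowF hcomp) hM hP hPM)

lemma isMaxBelowUnion_of_mem_maxBelowF (hP : P ∈ MaxBelowF H A) : IsMaxBelowUnion H A P := by
  simpa using isMaxBelowUnion_sup hcomp (singleton_subset_iff.2 hP)

lemma isMaxBelowUnion_of_mem_genF {S : Finset α} (hS : S ∈ genF H A) : IsMaxBelowUnion H A S := by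
  obtain ⟨M, hM, -, -, rfl⟩ := mem_genF_iff.1 hS
  exact isMaxBelowUnion_sup hcomp hM

end MaxBelow

structure IsHierarchyOn (U : Finset α) (H : Finset (Finset α)) : Prop where
  subset : ∀ A ∈ H, A ⊆ U
  nonempty : ∀ A ∈ H, A.Nonempty
  top_mem : U ∈ H
  singleton_mem : ∀ x ∈ U, {x} ∈ H
  compatible : ∀ A ∈ H, ∀ B ∈ H, Compatible A B

structure IsAmplePatchworkOn (U : Finset α) (C : Finset (Finset α)) : Prop where
  subset : ∀ A ∈ C, A ⊆ U
  nonempty : ∀ A ∈ C, A.Nonempty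
  top_mem : U ∈ C
  singleton_mem : ∀ x ∈ U, {x} ∈ C
  satPW : IsSatPWF C
  ample : IsAmpleF C

def patchworkOf (U : Finset α) (H : Finset (Finset α)) : Finset (Finset α) :=
  insert U ((H.filter fun A => 2 ≤ A.card).biUnion fun A => genF H A)

lemma mem_patchworkOf {U S : Finset α} {H : Finset (Finset α)} :
    S ∈ patchworkOf U H ↔ S = U ∨ ∃ A ∈ H, 2 ≤ A.card ∧ S ∈ genF H A := by
  simp only [patchworkOf, mem_insert, mem_biUnion, mem_filter, and_assoc]

namespace IsHierarchyOn

variable {U A B S : Finset α} {H : Finset (Finset α)} (hH : IsHierarchyOn U H)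
include hH

lemma nonempty_of_mem_maxBelowF {P : Finset α} (hP : P ∈ MaxBelowF H A) : P.Nonempty :=
  hH.nonempty P (maxBelowF_subset hP)

lemma sup_maxBelowF (hA : A ∈ H) (h2 : 2 ≤ A.card) : (MaxBelowF H A).sup id = A := by
  refine Subset.antisymm (Finset.sup_le fun P hP => (ssubset_of_mem_maxBelowF hP).subset)
    fun x hx => ?_
  have hxA : {x} ⊂ A := ssubset_of_subset_of_ne (singleton_subset_iff.2 hx) fun h => by
    rw [← h, card_singleton] at h2; omega
  obtain ⟨P, hP, hxP⟩ :=
    exists_mem_maxBelowF_superset (hH.singleton_mem x (hH.subset A hA hx)) hxA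
  exact mem_sup.2 ⟨P, hP, hxP (mem_singleton_self x)⟩

lemma two_le_card_maxBelowF (hA : A ∈ H) (h2 : 2 ≤ A.card) : 2 ≤ (MaxBelowF H A).card :=
  two_le_card_of_sup_id_eq (hH.sup_maxBelowF hA h2) (card_pos.1 (by omega))
    fun _ hP => (ssubset_of_mem_maxBelowF hP).ne

lemma nonempty_ssubset_of_mem_genF (hS : S ∈ genF H A) : S.Nonempty ∧ S ⊂ A := by
  obtain ⟨M, hM, ⟨P, hP⟩, hMne, rfl⟩ := mem_genF_iff.1 hS
  obtain ⟨Q, hQ, hQM⟩ := exists_of_ssubset (ssubset_of_subset_of_ne hM hMne)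
  have hQne := hH.nonempty_of_mem_maxBelowF hQ
  refine ⟨(hH.nonempty_of_mem_maxBelowF (hM hP)).mono (le_sup (f := id) hP),
    ssubset_of_subset_of_ne (isMaxBelowUnion_sup hH.compatible hM).1 fun h => ?_⟩
  have hdisj := disjoint_sup_id_of_notMem (pairwiseDisjoint_maxBelowF hH.compatible) hM hQ hQM
  rw [h] at hdisj
  exact hQne.ne_empty (disjoint_self.1 (hdisj.mono_right (ssubset_of_mem_maxBelowF hQ).subset))

lemma subset_of_mem_patchworkOf (hS : S ∈ patchworkOf U H) : S ⊆ U := by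
  rcases mem_patchworkOf.1 hS with rfl | ⟨A, hA, -, hSA⟩
  · exact subset_rfl
  · exact (hH.nonempty_ssubset_of_mem_genF hSA).2.subset.trans (hH.subset A hA)

lemma nonempty_of_mem_patchworkOf (hS : S ∈ patchworkOf U H) : S.Nonempty := by
  rcases mem_patchworkOf.1 hS with rfl | ⟨A, -, -, hSA⟩
  · exact hH.nonempty _ hH.top_mem
  · exact (hH.nonempty_ssubset_of_mem_genF hSA).1

lemma exists_mem_maxBelowF (hB : B ∈ H) (hBU : B ≠ U) : ∃ A ∈ H, B ∈ MaxBelowF H A := by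
  have hBU' : B ⊂ U := ssubset_of_subset_of_ne (hH.subset B hB) hBU
  obtain ⟨A, hA⟩ := (H.filter (B ⊂ ·)).exists_minimal ⟨U, mem_filter.2 ⟨hH.top_mem, hBU'⟩⟩
  obtain ⟨hAH, hBA⟩ := mem_filter.1 hA.1
  refine ⟨A, hAH, mem_maxBelowF_iff_maximal.2 ⟨mem_filter.2 ⟨hB, hBA⟩, fun B' hB' hBB' => ?_⟩⟩
  obtain ⟨hB'H, hB'A⟩ := mem_filter.1 hB'
  by_contra hB'B
  exact hA.not_lt (mem_filter.2 ⟨hB'H, hBB'.ssubset_of_not_subset hB'B⟩) hB'A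

lemma mem_genF_of_mem_maxBelowF {P : Finset α} (hA : A ∈ H) (h2 : 2 ≤ A.card)
    (hP : P ∈ MaxBelowF H A) :
    P ∈ genF H A := by
  refine mem_genF_iff.2 ⟨{P}, singleton_subset_iff.2 hP, singleton_nonempty P, fun h => ?_,
    sup_singleton⟩
  have := hH.two_le_card_maxBelowF hA h2
  rw [← h, card_singleton] at this
  omega

lemma subset_patchworkOf : H ⊆ patchworkOf U H := by
  intro B hB
  rcases eq_or_ne B U with rfl | hBU
  · exact mem_insert_self _ _
  obtain ⟨A, hA, hBA⟩ := hH.exists_mem_maxBelowF hB hBU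
  have h2 := two_le_card_of_ssubset (hH.nonempty B hB) (ssubset_of_mem_maxBelowF hBA)
  exact mem_patchworkOf.2 (Or.inr ⟨A, hA, h2, hH.mem_genF_of_mem_maxBelowF hA h2 hBA⟩)

lemma mem_patchworkOf_of_isMaxBelowUnion {X : Finset α} (hA : A ∈ H) (h2 : 2 ≤ A.card)
    (hX : IsMaxBelowUnion H A X) (hXne : X.Nonempty) : X ∈ patchworkOf U H := by
  have hXeq := eq_sup_filter_of_subset_or_disjoint
    (hX.1.trans (hH.sup_maxBelowF hA h2).superset) hX.2
  set T := (MaxBelowF H A).filter (· ⊆ X)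
  by_cases hT : T = MaxBelowF H A
  · rw [hXeq, hT, hH.sup_maxBelowF hA h2]
    exact hH.subset_patchworkOf hA
  have hTne : T.Nonempty := by
    rw [nonempty_iff_ne_empty]
    rintro hT
    rw [hT, sup_empty] at hXeq
    exact hXne.ne_empty hXeq
  exact mem_patchworkOf.2 (Or.inr ⟨A, hA, h2, mem_genF_iff.2 ⟨T, filter_subset _ _, hTne, hT,
    hXeq.symm⟩⟩)

end IsHierarchyOn

def adjOn (U : Finset α) (C : Finset (Finset α)) : Finset (Finset α) :=
  U.powerset.filter fun A => A.Nonempty ∧ ∀ B ∈ C, Compatible A B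

lemma mem_adjOn {U A : Finset α} {C : Finset (Finset α)} :
    A ∈ adjOn U C ↔ A ⊆ U ∧ A.Nonempty ∧ ∀ B ∈ C, Compatible A B := by
  rw [adjOn, mem_filter, mem_powerset]

namespace IsHierarchyOn

variable {U A A' B S S' X : Finset α} {H : Finset (Finset α)} (hH : IsHierarchyOn U H)
include hH

lemma compatible_of_subset_of_mem_genF (hA : A ∈ H) (hAA' : A ⊂ A') (hX : X ⊆ A)
    (hS : S ∈ genF H A') : Compatible X S := by
  obtain ⟨P, hP, hAP⟩ := exists_mem_maxBelowF_superset hA hAA'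
  rcases (isMaxBelowUnion_of_mem_genF hH.compatible hS).2 P hP with h | h
  · exact compatible_of_subset ((hX.trans hAP).trans h)
  · exact compatible_of_disjoint (h.mono_left (hX.trans hAP))

lemma compatible_of_mem_of_mem_patchworkOf (hB : B ∈ H) (hS : S ∈ patchworkOf U H) :
    Compatible B S := by
  rcases mem_patchworkOf.1 hS with rfl | ⟨A, hA, -, hSA⟩
  · exact compatible_of_subset (hH.subset B hB)
  have hSA' := (hH.nonempty_ssubset_of_mem_genF hSA).2.subset
  rcases compatible_iff.1 (hH.compatible B hB A hA) with h | h | h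
  · exact compatible_of_disjoint (h.mono_right hSA')
  · rcases eq_or_ne B A with rfl | hne
    · exact compatible_of_superset hSA'
    · exact hH.compatible_of_subset_of_mem_genF hB (ssubset_of_subset_of_ne h hne) subset_rfl hSA
  · exact compatible_of_superset (hSA'.trans h)

lemma compatible_of_mem_genF_of_ne (hA : A ∈ H) (hA' : A' ∈ H) (hne : A ≠ A')
    (hS : S ∈ genF H A) (hS' : S' ∈ genF H A') : Compatible S S' := by
  have hSA := (hH.nonempty_ssubset_of_mem_genF hS).2.subset
  have hSA' := (hH.nonempty_ssubset_of_mem_genF hS').2.subset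
  rcases compatible_iff.1 (hH.compatible A hA A' hA') with h | h | h
  · exact compatible_of_disjoint (h.mono hSA hSA')
  · exact hH.compatible_of_subset_of_mem_genF hA (ssubset_of_subset_of_ne h hne) hSA hS'
  · exact compatible_comm.1
      (hH.compatible_of_subset_of_mem_genF hA' (ssubset_of_subset_of_ne h hne.symm) hSA' hS)

lemma notMem_genF_of_ssubset (hA : A ∈ H) (hAA' : A ⊂ A') (hS : S ∈ genF H A) :
    S ∉ genF H A' := by
  intro hS'
  obtain ⟨hSne, hSA⟩ := hH.nonempty_ssubset_of_mem_genF hS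
  obtain ⟨P, hP, hAP⟩ := exists_mem_maxBelowF_superset hA hAA'
  have hSP := (isMaxBelowUnion_of_mem_genF hH.compatible hS').eq_of_subset hSne hP
    (hSA.subset.trans hAP)
  exact hSA.not_subset (hSP ▸ hAP)

lemma disjoint_genF (hA : A ∈ H) (hA' : A' ∈ H) (hne : A ≠ A') :
    Disjoint (genF H A) (genF H A') := by
  refine disjoint_left.2 fun S hS hS' => ?_
  rcases compatible_iff.1 (hH.compatible A hA A' hA') with h | h | h
  · obtain ⟨hSne, hSA⟩ := hH.nonempty_ssubset_of_mem_genF hS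
    have hSA' := (hH.nonempty_ssubset_of_mem_genF hS').2.subset
    exact hSne.ne_empty (disjoint_self.1 (h.mono hSA.subset hSA'))
  · exact hH.notMem_genF_of_ssubset hA (ssubset_of_subset_of_ne h hne) hS hS'
  · exact hH.notMem_genF_of_ssubset hA' (ssubset_of_subset_of_ne h hne.symm) hS' hS

lemma top_notMem_genF (hA : A ∈ H) : U ∉ genF H A := fun hU =>
  (hH.nonempty_ssubset_of_mem_genF hU).2.not_subset (hH.subset A hA)

/-- The witness is `P₁ ∪ P₂` for members `P₁ ⊆ X` and `P₂` disjoint from `X` of `Max(H:B)`. -/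
lemma exists_mem_patchworkOf_not_compatible (hB : B ∈ H) (h2 : 2 ≤ B.card)
    (hX : IsMaxBelowUnion H B X) (hXne : X.Nonempty) (hXB : X ≠ B)
    (hXP : ∀ P ∈ MaxBelowF H B, ¬X ⊆ P) :
    ∃ S ∈ patchworkOf U H, ¬Compatible X S := by
  have hsup := hH.sup_maxBelowF hB h2
  obtain ⟨x, hx⟩ := hXne
  obtain ⟨P₁, hP₁, hxP₁⟩ := mem_sup.1 (hsup.symm ▸ hX.1 hx)
  have hP₁X : P₁ ⊆ X := (hX.2 P₁ hP₁).resolve_right fun h => disjoint_left.1 h hxP₁ hx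
  obtain ⟨P₂, hP₂, hP₂X⟩ : ∃ P₂ ∈ MaxBelowF H B, Disjoint P₂ X := by
    by_contra! h
    exact hXB (Subset.antisymm hX.1
      (hsup ▸ Finset.sup_le fun P hP => (hX.2 P hP).resolve_right (h P hP)))
  obtain ⟨z, hz⟩ := hH.nonempty_of_mem_maxBelowF hP₂
  refine ⟨P₁ ∪ P₂, hH.mem_patchworkOf_of_isMaxBelowUnion hB h2
    ((isMaxBelowUnion_of_mem_maxBelowF hH.compatible hP₁).union
      (isMaxBelowUnion_of_mem_maxBelowF hH.compatible hP₂)) ⟨x, mem_union_left _ hxP₁⟩,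
    not_compatible_iff.2 ⟨⟨x, mem_inter.2 ⟨hx, mem_union_left _ hxP₁⟩⟩, fun h => ?_, fun h => ?_⟩⟩
  · exact hXP P₁ hP₁ fun y hy =>
      (mem_union.1 (h hy)).resolve_right fun hy₂ => disjoint_left.1 hP₂X hy₂ hy
  · exact disjoint_left.1 hP₂X hz (h (mem_union_right _ hz))

lemma mem_of_forall_compatible (hXU : X ⊆ U) (hXne : X.Nonempty)
    (hX : ∀ S ∈ patchworkOf U H, Compatible X S) : X ∈ H := by
  obtain ⟨B, hB⟩ := (H.filter (X ⊆ ·)).exists_minimal ⟨U, mem_filter.2 ⟨hH.top_mem, hXU⟩⟩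
  obtain ⟨hBH, hXB⟩ := mem_filter.1 hB.1
  by_contra hXH
  have hXB' : X ≠ B := fun h => hXH (h ▸ hBH)
  have hXP : ∀ P ∈ MaxBelowF H B, ¬X ⊆ P := fun P hP hXP =>
    hB.not_lt (mem_filter.2 ⟨maxBelowF_subset hP, hXP⟩) (ssubset_of_mem_maxBelowF hP)
  have hXU : IsMaxBelowUnion H B X := by
    refine ⟨hXB, fun P hP => ?_⟩
    rcases compatible_iff.1 (hX P (hH.subset_patchworkOf (maxBelowF_subset hP))) with h | h | h
    · exact Or.inr h.symm
    · exact absurd h (hXP P hP)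
    · exact Or.inl h
  obtain ⟨S, hS, hXS⟩ := hH.exists_mem_patchworkOf_not_compatible hBH
    (two_le_card_of_ssubset hXne (ssubset_of_subset_of_ne hXB hXB')) hXU hXne hXB' hXP
  exact hXS (hX S hS)

lemma adjOn_patchworkOf : adjOn U (patchworkOf U H) = H := by
  ext X
  rw [mem_adjOn]
  exact ⟨fun ⟨hXU, hXne, hX⟩ => hH.mem_of_forall_compatible hXU hXne hX, fun hX =>
    ⟨hH.subset X hX, hH.nonempty X hX, fun _ hS => hH.compatible_of_mem_of_mem_patchworkOf hX hS⟩⟩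

lemma isSatPWF_patchworkOf : IsSatPWF (patchworkOf U H) := by
  intro S hS S' hS' hc
  obtain ⟨hi, hSS', hS'S⟩ := not_compatible_iff.1 hc
  obtain ⟨A, hA, h2, hSA⟩ := (mem_patchworkOf.1 hS).resolve_left fun h =>
    hS'S (h ▸ hH.subset_of_mem_patchworkOf hS')
  obtain ⟨A', hA', -, hSA'⟩ := (mem_patchworkOf.1 hS').resolve_left fun h =>
    hSS' (h ▸ hH.subset_of_mem_patchworkOf hS)
  obtain rfl : A = A' := by
    by_contra hne
    exact hc (hH.compatible_of_mem_genF_of_ne hA hA' hne hSA hSA')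
  have hX := isMaxBelowUnion_of_mem_genF hH.compatible hSA
  have hY := isMaxBelowUnion_of_mem_genF hH.compatible hSA'
  have hd : (S \ S').Nonempty := sdiff_nonempty.2 hSS'
  have mem := fun {Z} (hZ : IsMaxBelowUnion H A Z) (hZne : Z.Nonempty) =>
    hH.mem_patchworkOf_of_isMaxBelowUnion hA h2 hZ hZne
  exact ⟨mem (hX.inter hY) hi, mem (hX.union hY) (hd.mono (sdiff_subset.trans subset_union_left)),
    mem (hX.sdiff hY) hd, mem (hY.sdiff hX) (sdiff_nonempty.2 hS'S),
    mem ((hX.union hY).sdiff (hX.inter hY))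
      (hd.mono (sdiff_subset_sdiff subset_union_left inter_subset_right))⟩

lemma isAmpleF_patchworkOf : IsAmpleF (patchworkOf U H) := by
  intro C₁ h₁ C₂ h₂ hss harc
  obtain ⟨B, hB, h2, hC₂B⟩ := (mem_patchworkOf.1 h₂).resolve_left fun h =>
    (h ▸ hss).not_subset (hH.subset_of_mem_patchworkOf h₁)
  have hC₂ := isMaxBelowUnion_of_mem_genF hH.compatible hC₂B
  obtain ⟨hC₂ne, hC₂B'⟩ := hH.nonempty_ssubset_of_mem_genF hC₂B
  have hC₁B : C₁ ⊆ B := by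
    rcases compatible_iff.1 (hH.compatible_of_mem_of_mem_patchworkOf hB h₁) with h | h | h
    · exact absurd (disjoint_self.1 (h.mono hC₂B'.subset hss.subset)) hC₂ne.ne_empty
    · rcases eq_or_ne B C₁ with rfl | hne
      · exact subset_rfl
      · exact absurd ⟨hC₂B', ssubset_of_subset_of_ne h hne⟩ (harc B (hH.subset_patchworkOf hB))
    · exact h
  have hC₁ : IsMaxBelowUnion H B C₁ := by
    refine ⟨hC₁B, fun P hP => ?_⟩
    rcases compatible_iff.1 (hH.compatible_of_mem_of_mem_patchworkOf (maxBelowF_subset hP) h₁)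
      with h | h | h
    · exact Or.inr h
    · exact Or.inl h
    · have hC₂P := hC₂.eq_of_subset hC₂ne hP (hss.subset.trans h)
      exact absurd h (hC₂P ▸ hss).not_subset
  exact hH.mem_patchworkOf_of_isMaxBelowUnion hB h2 (hC₁.sdiff hC₂)
    (sdiff_nonempty.2 hss.not_subset)

lemma card_genF (hA : A ∈ H) (h2 : 2 ≤ A.card) :
    (genF H A).card = 2 ^ (MaxBelowF H A).card - 2 := by
  set Max := MaxBelowF H A
  have hMax : Max ∈ Max.powerset.erase ∅ := mem_erase.2
    ⟨(card_pos.1 (two_pos.trans_le (hH.two_le_card_maxBelowF hA h2))).ne_empty,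
      mem_powerset_self Max⟩
  have hfilter : Max.powerset.filter (fun M => M.Nonempty ∧ M ≠ Max) =
      (Max.powerset.erase ∅).erase Max := by
    ext M
    simp only [mem_filter, mem_erase, nonempty_iff_ne_empty]
    tauto
  rw [genF, card_image_of_injOn, hfilter, card_erase_of_mem hMax,
    card_erase_of_mem (empty_mem_powerset Max), card_powerset]
  · omega
  intro M hM M' hM' h
  exact sup_id_injOn (pairwiseDisjoint_maxBelowF hH.compatible)
    (fun _ => hH.nonempty_of_mem_maxBelowF)
    (mem_powerset.1 (mem_filter.1 hM).1) (mem_powerset.1 (mem_filter.1 hM').1) h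

lemma card_patchworkOf : (patchworkOf U H).card =
    1 + ∑ A ∈ H.filter (fun A => 2 ≤ A.card), (2 ^ (MaxBelowF H A).card - 2) := by
  rw [patchworkOf, card_insert_of_notMem, card_biUnion, add_comm]
  · exact congrArg (1 + ·) (sum_congr rfl fun A hA =>
      hH.card_genF (mem_filter.1 hA).1 (mem_filter.1 hA).2)
  · exact fun A hA A' hA' hne => hH.disjoint_genF (mem_filter.1 hA).1 (mem_filter.1 hA').1 hne
  · rw [mem_biUnion]
    rintro ⟨A, hA, hU⟩
    exact hH.top_notMem_genF (mem_filter.1 hA).1 hU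

end IsHierarchyOn

lemma IsHierarchyOn.isAmplePatchworkOn_patchworkOf {U : Finset α} {H : Finset (Finset α)}
    (hH : IsHierarchyOn U H) : IsAmplePatchworkOn U (patchworkOf U H) where
  subset _ := hH.subset_of_mem_patchworkOf
  nonempty _ := hH.nonempty_of_mem_patchworkOf
  top_mem := mem_insert_self _ _
  singleton_mem x hx := hH.subset_patchworkOf (hH.singleton_mem x hx)
  satPW := hH.isSatPWF_patchworkOf
  ample := hH.isAmpleF_patchworkOf

open Classical in
/-- These turn out to form the partition `Max(C*:U)` of `U`. -/
noncomputable def topParts (U : Finset α) (C : Finset (Finset α)) : Finset (Finset α) :=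
  ((C.erase U).filter (Maximal (· ∈ C.erase U))).image (U \ ·)

lemma mem_topParts {U P : Finset α} {C : Finset (Finset α)} :
    P ∈ topParts U C ↔ ∃ M, Maximal (· ∈ C.erase U) M ∧ U \ M = P := by
  simp only [topParts, mem_image, mem_filter]
  exact ⟨fun ⟨M, ⟨_, hM⟩, h⟩ => ⟨M, hM, h⟩, fun ⟨M, hM, h⟩ => ⟨M, ⟨hM.1, hM⟩, h⟩⟩

lemma eq_or_eq_of_maximal_mem_erase {U B M : Finset α} {C : Finset (Finset α)}
    (hM : Maximal (· ∈ C.erase U) M) (hB : B ∈ C) (hMB : M ⊆ B) : B = M ∨ B = U := by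
  rcases eq_or_ne B U with h | h
  · exact Or.inr h
  · exact Or.inl (hM.eq_of_ge (mem_erase.2 ⟨h, hB⟩) hMB)

lemma disjoint_of_compatible_of_maximal {p : Finset α → Prop} {M M' : Finset α}
    (hM : Maximal p M) (hM' : Maximal p M') (hne : M ≠ M') (hc : Compatible M M') :
    Disjoint M M' :=
  (compatible_iff.1 hc).resolve_right fun h =>
    hne (h.elim (hM.eq_of_le hM'.1) fun h => (hM'.eq_of_le hM.1 h).symm)

namespace IsAmplePatchworkOn

variable {U B P S M M' : Finset α} {C : Finset (Finset α)} (hC : IsAmplePatchworkOn U C)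
include hC

lemma restrict (hP : P ∈ C) : IsAmplePatchworkOn P (C.filter (· ⊆ P)) where
  subset _ hA := (mem_filter.1 hA).2
  nonempty _ hA := hC.nonempty _ (mem_filter.1 hA).1
  top_mem := mem_filter.2 ⟨hP, subset_rfl⟩
  singleton_mem x hx :=
    mem_filter.2 ⟨hC.singleton_mem x (hC.subset P hP hx), singleton_subset_iff.2 hx⟩
  satPW A hA B hB hc := by
    obtain ⟨hA, hAP⟩ := mem_filter.1 hA
    obtain ⟨hB, hBP⟩ := mem_filter.1 hB
    obtain ⟨h₁, h₂, h₃, h₄, h₅⟩ := hC.satPW A hA B hB hc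
    simp only [mem_filter]
    exact ⟨⟨h₁, inter_subset_left.trans hAP⟩, ⟨h₂, union_subset hAP hBP⟩,
      ⟨h₃, sdiff_subset.trans hAP⟩, ⟨h₄, sdiff_subset.trans hBP⟩,
      ⟨h₅, sdiff_subset.trans (union_subset hAP hBP)⟩⟩
  ample C₁ h₁ C₂ h₂ hss harc := by
    obtain ⟨h₁, h₁P⟩ := mem_filter.1 h₁
    exact mem_filter.2 ⟨hC.ample C₁ h₁ C₂ (mem_filter.1 h₂).1 hss fun B hB hB' =>
      harc B (mem_filter.2 ⟨hB, hB'.2.subset.trans h₁P⟩) hB', sdiff_subset.trans h₁P⟩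

section Coatom

variable (hM : Maximal (· ∈ C.erase U) M)
include hM

lemma sdiff_coatom_mem : U \ M ∈ C := by
  obtain ⟨hMU, hMC⟩ := mem_erase.1 hM.1
  refine hC.ample U hC.top_mem M hMC (ssubset_of_subset_of_ne (hC.subset M hMC) hMU) ?_
  rintro B hB ⟨h₁, h₂⟩
  rcases eq_or_eq_of_maximal_mem_erase hM hB h₁.subset with rfl | rfl
  · exact h₁.ne rfl
  · exact h₂.ne rfl

lemma sdiff_coatom_ne_top : U \ M ≠ U := by
  obtain ⟨x, hx⟩ := hC.nonempty M (mem_erase.1 hM.1).2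
  intro h
  exact (mem_sdiff.1 (h.symm ▸ hC.subset M (mem_erase.1 hM.1).2 hx)).2 hx

variable (hM' : Maximal (· ∈ C.erase U) M') (hne : M ≠ M')
include hM' hne

lemma union_coatoms_eq : M ∪ M' = U := by
  have hMC := (mem_erase.1 hM.1).2
  have hM'C := (mem_erase.1 hM'.1).2
  by_cases hc : Compatible M M'
  · have hdisj := disjoint_of_compatible_of_maximal hM hM' hne hc
    obtain ⟨M'', hQM'', hM''⟩ := (C.erase U).exists_le_maximal
      (mem_erase.2 ⟨hC.sdiff_coatom_ne_top hM, hC.sdiff_coatom_mem hM⟩)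
    obtain rfl : M'' = M' := hM'.eq_of_ge hM''.1
      ((subset_sdiff.2 ⟨hC.subset M' hM'C, hdisj.symm⟩).trans hQM'')
    refine Subset.antisymm (union_subset (hC.subset M hMC) (hC.subset _ hM'C)) fun x hx => ?_
    by_cases hxM : x ∈ M
    · exact mem_union_left _ hxM
    · exact mem_union_right _ (hQM'' (mem_sdiff.2 ⟨hx, hxM⟩))
  · rcases eq_or_eq_of_maximal_mem_erase hM (hC.satPW M hMC M' hM'C hc).2.1
      subset_union_left with h | h
    · exact absurd (hM'.eq_of_le hM.1 (h ▸ subset_union_right)) hne.symm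
    · exact h

lemma disjoint_sdiff_coatoms : Disjoint (U \ M) (U \ M') := by
  rw [disjoint_iff_inter_eq_empty, ← sdiff_union_distrib, hC.union_coatoms_eq hM hM' hne,
    sdiff_self, bot_eq_empty]

lemma union_sdiff_coatoms_mem : U \ M ∪ U \ M' ∈ C := by
  have hMC := (mem_erase.1 hM.1).2
  have hM'C := (mem_erase.1 hM'.1).2
  rw [← sdiff_inter_distrib_right]
  by_cases hc : Compatible M M'
  · rw [disjoint_iff_inter_eq_empty.1 (disjoint_of_compatible_of_maximal hM hM' hne hc),
      sdiff_empty]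
    exact hC.top_mem
  · rw [← hC.union_coatoms_eq hM hM' hne]
    exact (hC.satPW M hMC M' hM'C hc).2.2.2.2

end Coatom

end IsAmplePatchworkOn

namespace IsAmplePatchworkOn

variable {U P Q S : Finset α} {C T : Finset (Finset α)} (hC : IsAmplePatchworkOn U C)
include hC

lemma topParts_subset : topParts U C ⊆ C := by
  intro P hP
  obtain ⟨M, hM, rfl⟩ := mem_topParts.1 hP
  exact hC.sdiff_coatom_mem hM

lemma ne_top_of_mem_topParts (hP : P ∈ topParts U C) : P ≠ U := by
  obtain ⟨M, hM, rfl⟩ := mem_topParts.1 hP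
  exact hC.sdiff_coatom_ne_top hM

lemma pairwiseDisjoint_topParts : (topParts U C : Set (Finset α)).PairwiseDisjoint id := by
  intro P hP Q hQ hPQ
  obtain ⟨M, hM, rfl⟩ := mem_topParts.1 hP
  obtain ⟨M', hM', rfl⟩ := mem_topParts.1 hQ
  exact hC.disjoint_sdiff_coatoms hM hM' fun h => hPQ (h ▸ rfl)

lemma union_mem_of_mem_topParts (hP : P ∈ topParts U C) (hQ : Q ∈ topParts U C) (hPQ : P ≠ Q) :
    P ∪ Q ∈ C := by
  obtain ⟨M, hM, rfl⟩ := mem_topParts.1 hP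
  obtain ⟨M', hM', rfl⟩ := mem_topParts.1 hQ
  exact hC.union_sdiff_coatoms_mem hM hM' fun h => hPQ (h ▸ rfl)

lemma sup_mem_of_subset_topParts (hT : T ⊆ topParts U C) (hTne : T.Nonempty) : T.sup id ∈ C := by
  have hne : ∀ P ∈ topParts U C, P.Nonempty := fun P hP => hC.nonempty P (hC.topParts_subset hP)
  induction T using Finset.induction_on with
  | empty => exact absurd hTne (by simp)
  | insert t T ht ih =>
    rw [insert_subset_iff] at hT
    rw [sup_insert, id]
    rcases T.eq_empty_or_nonempty with rfl | ⟨s, hs⟩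
    · simpa using hC.topParts_subset hT.1
    have hts : t ≠ s := fun h => ht (h ▸ hs)
    have hY := hC.union_mem_of_mem_topParts hT.1 (hT.2 hs) hts
    by_cases hTs : T = {s}
    · subst hTs
      simpa using hY
    obtain ⟨s', hs', hs's⟩ := exists_mem_ne
      (one_lt_card_iff_nontrivial.2 ((nontrivial_iff_ne_singleton hs).2 hTs)) s
    have hdisj := hC.pairwiseDisjoint_topParts
    have hsX : s ⊆ T.sup id := le_sup (f := id) hs
    have htX : Disjoint t (T.sup id) := disjoint_sup_id_of_notMem hdisj hT.2 hT.1 ht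
    have hs'X : s' ⊆ T.sup id := le_sup (f := id) hs'
    have hs't : Disjoint s' (t ∪ s) := disjoint_union_right.2
      ⟨hdisj (hT.2 hs') hT.1 fun h => ht (h ▸ hs'), hdisj (hT.2 hs') (hT.2 hs) hs's⟩
    -- `T.sup id` and `t ∪ s` overlap in `s`, and each contains a part missing from the other
    have hnc : ¬Compatible (T.sup id) (t ∪ s) := by
      refine not_compatible_iff.2 ⟨(hne s (hT.2 hs)).mono (subset_inter hsX subset_union_right),
        fun h => ?_, fun h => ?_⟩
      · exact (hne s' (hT.2 hs')).ne_empty (disjoint_self.1 (hs't.mono_right (hs'X.trans h)))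
      · exact (hne t hT.1).ne_empty (disjoint_self.1 (htX.mono_right (subset_union_left.trans h)))
    have hXY := (hC.satPW _ (ih hT.2 ⟨s, hs⟩) _ hY hnc).2.1
    rwa [union_comm, union_assoc, union_eq_right.2 hsX] at hXY

lemma sup_topParts (h2 : 2 ≤ U.card) : (topParts U C).sup id = U := by
  obtain ⟨x, hx⟩ := card_pos.1 (by omega : 0 < U.card)
  have hxU : {x} ≠ U := fun h => by rw [← h, card_singleton] at h2; omega
  obtain ⟨M₀, -, hM₀⟩ := (C.erase U).exists_le_maximal
    (mem_erase.2 ⟨hxU, hC.singleton_mem x hx⟩)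
  have hP₀ : U \ M₀ ∈ topParts U C := mem_topParts.2 ⟨M₀, hM₀, rfl⟩
  have hZ := hC.sup_mem_of_subset_topParts subset_rfl ⟨_, hP₀⟩
  by_contra hZU
  obtain ⟨M, hZM, hM⟩ := (C.erase U).exists_le_maximal (mem_erase.2 ⟨hZU, hZ⟩)
  have hP : U \ M ∈ topParts U C := mem_topParts.2 ⟨M, hM, rfl⟩
  obtain ⟨y, hy⟩ := hC.nonempty _ (hC.topParts_subset hP)
  exact (mem_sdiff.1 hy).2 (hZM (le_sup (f := id) hP hy))

lemma two_le_card_topParts (h2 : 2 ≤ U.card) : 2 ≤ (topParts U C).card :=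
  two_le_card_of_sup_id_eq (hC.sup_topParts h2) (hC.nonempty U hC.top_mem)
    fun _ => hC.ne_top_of_mem_topParts

lemma compatible_of_mem_topParts (hP : P ∈ topParts U C) (hS : S ∈ C) : Compatible S P := by
  obtain ⟨M, hM, rfl⟩ := mem_topParts.1 hP
  have hMC := (mem_erase.1 hM.1).2
  by_contra hc
  obtain ⟨⟨x, hx⟩, hSP, hPS⟩ := not_compatible_iff.1 hc
  have hSM : ¬S ⊆ M := fun h => (mem_sdiff.1 (mem_inter.1 hx).2).2 (h (mem_inter.1 hx).1)
  have hSM' : S ∪ M = U := by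
    by_cases hc' : Compatible S M
    · rcases compatible_iff.1 hc' with h | h | h
      · exact absurd (subset_sdiff.2 ⟨hC.subset S hS, h⟩) hSP
      · exact absurd h hSM
      · rcases eq_or_eq_of_maximal_mem_erase hM hS h with rfl | rfl
        · exact absurd subset_rfl hSM
        · exact union_eq_left.2 h
    · rcases eq_or_eq_of_maximal_mem_erase hM (hC.satPW S hS M hMC hc').2.1 subset_union_right
        with h | h
      · exact absurd (h ▸ subset_union_left) hSM
      · exact h
  exact hPS fun y hy => (mem_union.1 (hSM' ▸ (mem_sdiff.1 hy).1)).resolve_right (mem_sdiff.1 hy).2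

lemma subset_topParts_or_eq_sup (h2 : 2 ≤ U.card) (hS : S ∈ C) (hSU : S ≠ U) :
    (∃ P ∈ topParts U C, S ⊆ P) ∨
      ∃ T ⊆ topParts U C, T.Nonempty ∧ T ≠ topParts U C ∧ T.sup id = S := by
  by_cases h : ∃ P ∈ topParts U C, S ⊆ P
  · exact Or.inl h
  push Not at h
  have hS' := eq_sup_filter_of_subset_or_disjoint
    ((hC.subset S hS).trans (hC.sup_topParts h2).ge) fun P hP => by
      rcases compatible_iff.1 (hC.compatible_of_mem_topParts hP hS) with h' | h' | h'
      · exact Or.inr h'.symm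
      · exact absurd h' (h P hP)
      · exact Or.inl h'
  refine Or.inr ⟨_, filter_subset _ _, nonempty_iff_ne_empty.2 fun hT => ?_, fun hT => ?_, hS'.symm⟩
  · rw [hT, sup_empty] at hS'
    exact (hC.nonempty S hS).ne_empty hS'
  · rw [hT, hC.sup_topParts h2] at hS'
    exact hSU hS'

end IsAmplePatchworkOn

def glue (U : Finset α) (parts : Finset (Finset α)) (Hf : Finset α → Finset (Finset α)) :
    Finset (Finset α) :=
  insert U (parts.biUnion Hf)

lemma mem_glue {U B : Finset α} {parts : Finset (Finset α)} {Hf : Finset α → Finset (Finset α)} :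
    B ∈ glue U parts Hf ↔ B = U ∨ ∃ P ∈ parts, B ∈ Hf P := by
  simp only [glue, mem_insert, mem_biUnion]

section Glue

variable {U A B P Q S : Finset α} {parts : Finset (Finset α)} {Hf : Finset α → Finset (Finset α)}
  (hdisj : (parts : Set (Finset α)).PairwiseDisjoint id) (hsup : parts.sup id = U)
  (h2 : 2 ≤ parts.card) (hHf : ∀ P ∈ parts, IsHierarchyOn P (Hf P))
include hdisj hHf

lemma eq_of_mem_of_subset_part (hP : P ∈ parts) (hQ : Q ∈ parts) (hB : B ∈ Hf P) (hBQ : B ⊆ Q) :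
    P = Q := by
  by_contra h
  exact ((hHf P hP).nonempty B hB).ne_empty
    (disjoint_self.1 ((hdisj hP hQ h).mono ((hHf P hP).subset B hB) hBQ))

include hsup h2

lemma part_ssubset_top (hP : P ∈ parts) : P ⊂ U := by
  refine ssubset_of_subset_of_ne (hsup ▸ le_sup (f := id) hP) fun hPU => ?_
  obtain ⟨Q, hQ, hQP⟩ := exists_mem_ne h2 P
  exact hQP (eq_of_mem_of_subset_part hdisj hHf hQ hP (hHf Q hQ).top_mem
    (hPU ▸ hsup ▸ le_sup (f := id) hQ))

lemma isHierarchyOn_glue : IsHierarchyOn U (glue U parts Hf) where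
  subset B hB := by
    rcases mem_glue.1 hB with rfl | ⟨P, hP, hBP⟩
    · exact subset_rfl
    · exact ((hHf P hP).subset B hBP).trans (part_ssubset_top hdisj hsup h2 hHf hP).subset
  nonempty B hB := by
    obtain ⟨P, hP⟩ := card_pos.1 (by omega : 0 < parts.card)
    rcases mem_glue.1 hB with rfl | ⟨Q, hQ, hBQ⟩
    · exact ((hHf P hP).nonempty P (hHf P hP).top_mem).mono
        (part_ssubset_top hdisj hsup h2 hHf hP).subset
    · exact (hHf Q hQ).nonempty B hBQ
  top_mem := mem_insert_self _ _
  singleton_mem x hx := by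
    obtain ⟨P, hP, hxP⟩ := mem_sup.1 (hsup ▸ hx)
    exact mem_glue.2 (Or.inr ⟨P, hP, (hHf P hP).singleton_mem x hxP⟩)
  compatible A hA B hB := by
    have hsub : ∀ {P}, P ∈ parts → ∀ B ∈ Hf P, B ⊆ U := fun hP B hB =>
      ((hHf _ hP).subset B hB).trans (part_ssubset_top hdisj hsup h2 hHf hP).subset
    rcases mem_glue.1 hA with rfl | ⟨P, hP, hAP⟩
    · rcases mem_glue.1 hB with rfl | ⟨Q, hQ, hBQ⟩
      · exact compatible_of_subset subset_rfl
      · exact compatible_of_superset (hsub hQ B hBQ)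
    rcases mem_glue.1 hB with rfl | ⟨Q, hQ, hBQ⟩
    · exact compatible_of_subset (hsub hP A hAP)
    rcases eq_or_ne P Q with rfl | hPQ
    · exact (hHf P hP).compatible A hAP B hBQ
    · exact compatible_of_disjoint
        ((hdisj hP hQ hPQ).mono ((hHf P hP).subset A hAP) ((hHf Q hQ).subset B hBQ))

lemma maxBelowF_glue_top : MaxBelowF (glue U parts Hf) U = parts := by
  have hPU : ∀ {P}, P ∈ parts → P ⊂ U := part_ssubset_top hdisj hsup h2 hHf
  ext P
  rw [mem_maxBelowF_iff_maximal]
  constructor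
  · rintro ⟨hP, hmax⟩
    obtain ⟨hPH, hPU'⟩ := mem_filter.1 hP
    obtain ⟨Q, hQ, hPQ⟩ := (mem_glue.1 hPH).resolve_left hPU'.ne
    have hQmem : Q ∈ (glue U parts Hf).filter (· ⊂ U) :=
      mem_filter.2 ⟨mem_glue.2 (Or.inr ⟨Q, hQ, (hHf Q hQ).top_mem⟩), hPU hQ⟩
    rwa [Subset.antisymm ((hHf Q hQ).subset P hPQ) (hmax hQmem ((hHf Q hQ).subset P hPQ))]
  · intro hP
    refine ⟨mem_filter.2 ⟨mem_glue.2 (Or.inr ⟨P, hP, (hHf P hP).top_mem⟩), hPU hP⟩,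
      fun B hB hPB => ?_⟩
    obtain ⟨hBH, hBU⟩ := mem_filter.1 hB
    obtain ⟨Q, hQ, hBQ⟩ := (mem_glue.1 hBH).resolve_left hBU.ne
    obtain rfl := eq_of_mem_of_subset_part hdisj hHf hP hQ (hHf P hP).top_mem
      (hPB.trans ((hHf Q hQ).subset B hBQ))
    exact (hHf P hP).subset B hBQ

lemma genF_glue (hP : P ∈ parts) (hA : A ∈ Hf P) : genF (glue U parts Hf) A = genF (Hf P) A := by
  have hAP := (hHf P hP).subset A hA
  refine genF_congr fun B hBA => ⟨fun hB => ?_, fun hB => mem_glue.2 (Or.inr ⟨P, hP, hB⟩)⟩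
  rcases mem_glue.1 hB with rfl | ⟨Q, hQ, hBQ⟩
  · exact absurd (hBA.trans hAP) (part_ssubset_top hdisj hsup h2 hHf hP).not_subset
  · rwa [← eq_of_mem_of_subset_part hdisj hHf hQ hP hBQ (hBA.trans hAP)]

lemma mem_patchworkOf_glue : S ∈ patchworkOf U (glue U parts Hf) ↔
    S = U ∨ (∃ T ⊆ parts, T.Nonempty ∧ T ≠ parts ∧ T.sup id = S) ∨
      ∃ P ∈ parts, S ∈ patchworkOf P (Hf P) := by
  have hG := isHierarchyOn_glue hdisj hsup h2 hHf
  have hU2 : 2 ≤ U.card := by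
    obtain ⟨P, hP⟩ := card_pos.1 (by omega : 0 < parts.card)
    exact two_le_card_of_ssubset ((hHf P hP).nonempty P (hHf P hP).top_mem)
      (part_ssubset_top hdisj hsup h2 hHf hP)
  have hgenU : S ∈ genF (glue U parts Hf) U ↔
      ∃ T ⊆ parts, T.Nonempty ∧ T ≠ parts ∧ T.sup id = S := by
    rw [mem_genF_iff, maxBelowF_glue_top hdisj hsup h2 hHf]
  rw [mem_patchworkOf]
  constructor
  · rintro (rfl | ⟨A, hA, hA2, hS⟩)
    · exact Or.inl rfl
    rcases mem_glue.1 hA with rfl | ⟨P, hP, hAP⟩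
    · exact Or.inr (Or.inl (hgenU.1 hS))
    · refine Or.inr (Or.inr ⟨P, hP, mem_patchworkOf.2 (Or.inr ⟨A, hAP, hA2, ?_⟩)⟩)
      rwa [← genF_glue hdisj hsup h2 hHf hP hAP]
  · rintro (rfl | hT | ⟨P, hP, hS⟩)
    · exact Or.inl rfl
    · exact Or.inr ⟨U, hG.top_mem, hU2, hgenU.2 hT⟩
    rcases mem_patchworkOf.1 hS with rfl | ⟨A, hA, hA2, hSA⟩
    · refine Or.inr ⟨U, hG.top_mem, hU2, hG.mem_genF_of_mem_maxBelowF hG.top_mem hU2 ?_⟩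
      rwa [maxBelowF_glue_top hdisj hsup h2 hHf]
    · refine Or.inr ⟨A, mem_glue.2 (Or.inr ⟨P, hP, hA⟩), hA2, ?_⟩
      rwa [genF_glue hdisj hsup h2 hHf hP hA]

end Glue

lemma patchworkOf_singleton_top (U : Finset α) : patchworkOf U {U} = {U} := by
  have hMax : MaxBelowF {U} U = ∅ := by
    ext B
    simp +contextual [MaxBelowF]
  have hgen : genF {U} U = ∅ := by simp [genF, hMax]
  rw [patchworkOf, filter_singleton]
  split_ifs <;> simp [hgen]

namespace IsAmplePatchworkOn

variable {U : Finset α} {C : Finset (Finset α)}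

lemma exists_hierarchy_of_card_lt_two (hC : IsAmplePatchworkOn U C) (h : U.card < 2) :
    ∃ H, IsHierarchyOn U H ∧ C = patchworkOf U H := by
  have hU := hC.nonempty U hC.top_mem
  have htop : ∀ S ⊆ U, S.Nonempty → S = U := fun S hSU hS =>
    eq_of_subset_of_card_le hSU (by have := hS.card_pos; omega)
  refine ⟨{U}, ⟨?_, ?_, mem_singleton_self U, ?_, ?_⟩, ?_⟩
  · simp
  · simpa using hU
  · exact fun x hx => mem_singleton.2 (htop _ (singleton_subset_iff.2 hx) (singleton_nonempty x))
  · simp [Compatible]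
  · ext S
    rw [patchworkOf_singleton_top, mem_singleton]
    exact ⟨fun hS => htop S (hC.subset S hS) (hC.nonempty S hS), fun h => h ▸ hC.top_mem⟩

theorem exists_hierarchy (hC : IsAmplePatchworkOn U C) :
    ∃ H, IsHierarchyOn U H ∧ C = patchworkOf U H := by
  induction U using Finset.strongInduction generalizing C with
  | H U ih =>
  by_cases h2 : 2 ≤ U.card
  swap
  · exact hC.exists_hierarchy_of_card_lt_two (by omega)
  -- the canonical hierarchy `(C|P)*` on each part spares us choosing one
  set Hf := fun P => adjOn P (C.filter (· ⊆ P))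
  have hHf : ∀ P ∈ topParts U C,
      IsHierarchyOn P (Hf P) ∧ C.filter (· ⊆ P) = patchworkOf P (Hf P) := by
    intro P hP
    have hPC := hC.topParts_subset hP
    obtain ⟨H, hH, hCH⟩ := ih P (ssubset_of_subset_of_ne (hC.subset P hPC)
      (hC.ne_top_of_mem_topParts hP)) (hC.restrict hPC)
    have hHfP : Hf P = H := by simp only [Hf]; rw [hCH, hH.adjOn_patchworkOf]
    exact hHfP ▸ ⟨hH, hCH⟩
  have hdisj := hC.pairwiseDisjoint_topParts
  have hsup := hC.sup_topParts h2
  have hcard := hC.two_le_card_topParts h2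
  have hHier : ∀ P ∈ topParts U C, IsHierarchyOn P (Hf P) := fun P hP => (hHf P hP).1
  refine ⟨glue U (topParts U C) Hf, isHierarchyOn_glue hdisj hsup hcard hHier, ?_⟩
  ext S
  rw [mem_patchworkOf_glue hdisj hsup hcard hHier]
  constructor
  · intro hS
    rcases eq_or_ne S U with hSU | hSU
    · exact Or.inl hSU
    rcases hC.subset_topParts_or_eq_sup h2 hS hSU with ⟨P, hP, hSP⟩ | hT
    · exact Or.inr (Or.inr ⟨P, hP, (hHf P hP).2 ▸ mem_filter.2 ⟨hS, hSP⟩⟩)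
    · exact Or.inr (Or.inl hT)
  · rintro (rfl | ⟨T, hT, hTne, -, rfl⟩ | ⟨P, hP, hSP⟩)
    · exact hC.top_mem
    · exact hC.sup_mem_of_subset_topParts hT hTne
    · exact (mem_filter.1 ((hHf P hP).2.symm ▸ hSP)).1

end IsAmplePatchworkOn

section Univ

variable [Fintype α] {C : Finset (Finset α)}

lemma ctrivF_subset_iff : CtrivF α ⊆ C ↔ univ ∈ C ∧ ∀ x, {x} ∈ C := by
  simp only [CtrivF, union_subset_iff, singleton_subset_iff, image_subset_iff, mem_univ,
    true_implies]
  exact and_comm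

lemma isHierarchyOn_univ_iff {H : Finset (Finset α)} :
    IsHierarchyOn univ H ↔ IsHierarchyF H ∧ CtrivF α ⊆ H := by
  rw [ctrivF_subset_iff]
  exact ⟨fun hH =>
      ⟨⟨hH.nonempty, hH.compatible⟩, hH.top_mem, fun x => hH.singleton_mem x (mem_univ x)⟩,
    fun ⟨⟨hne, hcomp⟩, htop, hsing⟩ =>
      ⟨fun A _ => subset_univ A, hne, htop, fun x _ => hsing x, hcomp⟩⟩

lemma isAmplePatchworkOn_univ_iff :
    IsAmplePatchworkOn univ C ↔ IsCSF C ∧ IsSatPWF C ∧ IsAmpleF C ∧ CtrivF α ⊆ C := by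
  rw [ctrivF_subset_iff]
  exact ⟨fun hC =>
      ⟨hC.nonempty, hC.satPW, hC.ample, hC.top_mem, fun x => hC.singleton_mem x (mem_univ x)⟩,
    fun ⟨hne, hsat, hamp, htop, hsing⟩ =>
      ⟨fun A _ => subset_univ A, hne, htop, fun x _ => hsing x, hsat, hamp⟩⟩

lemma adjF_eq_adjOn_univ : adjF C = adjOn univ C := by
  ext A
  simp [adjF, mem_adjOn]

end Univ

end ClusterSystems

theorem stmt14_general {α : Type*} [Fintype α] [DecidableEq α]
    (C : Finset (Finset α)) (hC : IsCSF C) :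
    ((IsSatPWF C ∧ IsAmpleF C ∧ CtrivF α ⊆ C) ↔
      ∃ H : Finset (Finset α), IsHierarchyF H ∧ CtrivF α ⊆ H ∧ H = adjF C ∧
        C = insert Finset.univ
              ((H.filter fun A => 2 ≤ A.card).biUnion fun A => genF H A) ∧
        (∀ A ∈ H, 2 ≤ A.card → Finset.univ ∉ genF H A) ∧
        (∀ A ∈ H, ∀ A' ∈ H, 2 ≤ A.card → 2 ≤ A'.card → A ≠ A' →
          Disjoint (genF H A) (genF H A'))) ∧
    ((IsSatPWF C ∧ IsAmpleF C ∧ CtrivF α ⊆ C) →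
      C.card = 1 + ∑ A ∈ (adjF C).filter (fun A => 1 < A.card),
        (2 ^ (MaxBelowF (adjF C) A).card - 2)) := by
  have hadj : ∀ H, IsHierarchyOn Finset.univ H → C = patchworkOf Finset.univ H → H = adjF C :=
    fun H hH hCH => by rw [adjF_eq_adjOn_univ, hCH, hH.adjOn_patchworkOf]
  refine ⟨⟨fun hsat => ?_, ?_⟩, fun hsat => ?_⟩
  · obtain ⟨H, hH, hCH⟩ := (isAmplePatchworkOn_univ_iff.2 ⟨hC, hsat⟩).exists_hierarchy
    exact ⟨H, (isHierarchyOn_univ_iff.1 hH).1, (isHierarchyOn_univ_iff.1 hH).2, hadj H hH hCH,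
      hCH, fun A hA _ => hH.top_notMem_genF hA, fun A hA A' hA' _ _ => hH.disjoint_genF hA hA'⟩
  · rintro ⟨H, hH, hHtriv, -, hCH, -⟩
    rw [hCH]
    exact (isAmplePatchworkOn_univ_iff.1
      (isHierarchyOn_univ_iff.2 ⟨hH, hHtriv⟩).isAmplePatchworkOn_patchworkOf).2
  · obtain ⟨H, hH, hCH⟩ := (isAmplePatchworkOn_univ_iff.2 ⟨hC, hsat⟩).exists_hierarchy
    rw [← hadj H hH hCH, hCH]
    exact hH.card_patchworkOf

/-- A cluster system `C` is an ample saturated patchwork containing `C_triv` iff it is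
the disjoint union of `{X}` and the sets `⟨Max(H:A)⟩` for `A ∈ H` with `|A| ≥ 2`,
where `H = C*` is the (necessarily unique) hierarchy containing `C_triv` with this
property; in this case `|C| = 1 + Σ_{A ∈ C*, |A| > 1} (2^{|Max(C*:A)|} - 2)`. -/
theorem stmt14 {α : Type*} [Fintype α] [DecidableEq α] (hcard : 2 ≤ Fintype.card α)
    (C : Finset (Finset α)) (hC : IsCSF C) :
    ((IsSatPWF C ∧ IsAmpleF C ∧ CtrivF α ⊆ C) ↔
      ∃ H : Finset (Finset α), IsHierarchyF H ∧ CtrivF α ⊆ H ∧ H = adjF C ∧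
        C = insert Finset.univ
              ((H.filter fun A => 2 ≤ A.card).biUnion fun A => genF H A) ∧
        (∀ A ∈ H, 2 ≤ A.card → Finset.univ ∉ genF H A) ∧
        (∀ A ∈ H, ∀ A' ∈ H, 2 ≤ A.card → 2 ≤ A'.card → A ≠ A' →
          Disjoint (genF H A) (genF H A'))) ∧
    ((IsSatPWF C ∧ IsAmpleF C ∧ CtrivF α ⊆ C) →
      C.card = 1 + ∑ A ∈ (adjF C).filter (fun A => 1 < A.card),
        (2 ^ (MaxBelowF (adjF C) A).card - 2)) :=
  stmt14_general C hC
end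

section
/- Let X be a finite set with |X| ≥ 2 and let C be a weak patchwork for X. For a cluster system C' ⊆ C, the smallest weak patchwork containing C' equals C if and only if C_extr ⊆ C'. -/
/-- A cluster system: a collection of non-empty subsets of `X`. -/
def IsCS {α : Type*} [DecidableEq α] (C : Set (Finset α)) : Prop :=
  ∀ A ∈ C, A.Nonempty

/-- The adjoint `C*`: all non-empty subsets of `X` compatible with every member of `C`. -/
def adjS {α : Type*} [DecidableEq α] (C : Set (Finset α)) : Set (Finset α) :=
  {A | A.Nonempty ∧ ∀ B ∈ C, Compatible A B}

/-- A hierarchy: a cluster system whose members are pairwise compatible. -/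
def IsHierarchyS {α : Type*} [DecidableEq α] (C : Set (Finset α)) : Prop :=
  IsCS C ∧ ∀ A ∈ C, ∀ B ∈ C, Compatible A B

/-- A maximal hierarchy: a hierarchy not properly contained in any other hierarchy. -/
def IsMaxHierarchyS {α : Type*} [DecidableEq α] (H : Set (Finset α)) : Prop :=
  IsHierarchyS H ∧ ∀ D : Set (Finset α), IsHierarchyS D → H ⊆ D → D = H

/-- A weak patchwork: incompatible members have their union in the system. -/
def IsWeakPW {α : Type*} [DecidableEq α] (C : Set (Finset α)) : Prop :=
  ∀ A ∈ C, ∀ B ∈ C, ¬Compatible A B → A ∪ B ∈ C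

/-- A patchwork: incompatible members have both intersection and union in the system. -/
def IsPW {α : Type*} [DecidableEq α] (C : Set (Finset α)) : Prop :=
  ∀ A ∈ C, ∀ B ∈ C, ¬Compatible A B → A ∩ B ∈ C ∧ A ∪ B ∈ C

/-- A saturated patchwork: for incompatible members `A`, `B`, the five sets
`A ∩ B`, `A ∪ B`, `A - B`, `B - A`, `(A ∪ B) - (A ∩ B)` lie in the system. -/
def IsSatPW {α : Type*} [DecidableEq α] (C : Set (Finset α)) : Prop :=
  ∀ A ∈ C, ∀ B ∈ C, ¬Compatible A B →
    A ∩ B ∈ C ∧ A ∪ B ∈ C ∧ A \ B ∈ C ∧ B \ A ∈ C ∧ (A ∪ B) \ (A ∩ B) ∈ C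

/-- The trivial cluster system: all singletons together with `X` itself. -/
def CtrivS (α : Type*) [Fintype α] [DecidableEq α] : Set (Finset α) :=
  {A | (∃ x : α, A = {x}) ∨ A = Finset.univ}

/-- `C` is ample: for every arc `(C₂, C₁)` of the Hasse diagram (i.e. `C₂ ⊊ C₁`
with nothing of `C` strictly between), `C₁ - C₂ ∈ C`. -/
def IsAmpleS {α : Type*} [DecidableEq α] (C : Set (Finset α)) : Prop :=
  ∀ C₁ ∈ C, ∀ C₂ ∈ C, C₂ ⊂ C₁ → (∀ B ∈ C, ¬(C₂ ⊂ B ∧ B ⊂ C₁)) → C₁ \ C₂ ∈ C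

/-- `C_extr`: the members of `C` that are not the union of two incompatible members. -/
def extrS {α : Type*} [DecidableEq α] (C : Set (Finset α)) : Set (Finset α) :=
  {A ∈ C | ¬∃ B ∈ C, ∃ B' ∈ C, ¬Compatible B B' ∧ A = B ∪ B'}

/-
An extreme member `A` of a weak patchwork `C` can be removed: `C \ {A}` is still a weak
patchwork, since `A` is not the union of incompatible members. Hence every extreme member
must already lie in `C'` for `C'` to generate `C`. Conversely, by strong induction on `A ⊆ X`,
a member of `C` is either extreme or the union of two incompatible, strictly smaller members,
so any weak patchwork containing `C_extr` contains all of `C`.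
-/

section

variable {α : Type*} [DecidableEq α]

theorem ssubset_union_left_of_not_compatible {B B' : Finset α} (h : ¬Compatible B B') :
    B ⊂ B ∪ B' :=
  Finset.ssubset_iff_subset_ne.mpr ⟨Finset.subset_union_left, fun hB => h <|
    Or.inr <| Or.inr <| Finset.inter_eq_right.mpr (hB ▸ Finset.subset_union_right)⟩

theorem ssubset_union_right_of_not_compatible {B B' : Finset α} (h : ¬Compatible B B') :
    B' ⊂ B ∪ B' :=
  Finset.ssubset_iff_subset_ne.mpr ⟨Finset.subset_union_right, fun hB' => h <|
    Or.inr <| Or.inl <| Finset.inter_eq_left.mpr (hB' ▸ Finset.subset_union_left)⟩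

theorem IsWeakPW.diff_singleton_of_mem_extrS {C : Set (Finset α)} (hW : IsWeakPW C)
    {A : Finset α} (hA : A ∈ extrS C) : IsWeakPW (C \ {A}) := by
  intro B hB B' hB' hinc
  refine ⟨hW B hB.1 B' hB'.1 hinc, fun hunion => hA.2 ?_⟩
  exact ⟨B, hB.1, B', hB'.1, hinc, (Set.mem_singleton_iff.mp hunion).symm⟩

theorem IsWeakPW.subset_of_extrS_subset {C D : Set (Finset α)} (hD : IsWeakPW D)
    (hextr : extrS C ⊆ D) : C ⊆ D := by
  intro A
  induction A using Finset.strongInduction with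
  | H A ih =>
    intro hA
    by_cases hAextr : A ∈ extrS C
    · exact hextr hAextr
    · obtain ⟨B, hB, B', hB', hinc, rfl⟩ : ∃ B ∈ C, ∃ B' ∈ C, ¬Compatible B B' ∧ A = B ∪ B' :=
        not_not.mp fun h => hAextr ⟨hA, h⟩
      exact hD B (ih B (ssubset_union_left_of_not_compatible hinc) hB)
        B' (ih B' (ssubset_union_right_of_not_compatible hinc) hB') hinc

end

theorem stmt17_general {α : Type*} [DecidableEq α]
    (C : Set (Finset α)) (hW : IsWeakPW C)
    (C' : Set (Finset α)) (hsub : C' ⊆ C) :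
    ⋂₀ {D : Set (Finset α) | IsWeakPW D ∧ C' ⊆ D} = C ↔ extrS C ⊆ C' := by
  constructor
  · intro hEq A hA
    by_contra hAC'
    have hdiff : C \ {A} ∈ {D : Set (Finset α) | IsWeakPW D ∧ C' ⊆ D} :=
      ⟨hW.diff_singleton_of_mem_extrS hA, fun X hX => ⟨hsub hX, fun hXA => hAC' (hXA ▸ hX)⟩⟩
    have hAdiff : A ∈ C \ {A} := Set.sInter_subset_of_mem hdiff (hEq.symm ▸ hA.1)
    exact hAdiff.2 rfl
  · intro hextr
    refine (Set.sInter_subset_of_mem (show C ∈ {D : Set (Finset α) | IsWeakPW D ∧ C' ⊆ D} from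
      ⟨hW, hsub⟩)).antisymm ?_
    exact Set.subset_sInter fun D hD => hD.1.subset_of_extrS_subset (hextr.trans hD.2)

/-- For a weak patchwork `C` and `C' ⊆ C`, the smallest weak patchwork containing `C'`
equals `C` iff `C_extr ⊆ C'`. -/
theorem stmt17 {α : Type*} [Fintype α] [DecidableEq α] (hcard : 2 ≤ Fintype.card α)
    (C : Set (Finset α)) (hC : IsCS C) (hW : IsWeakPW C)
    (C' : Set (Finset α)) (hsub : C' ⊆ C) :
    ⋂₀ {D : Set (Finset α) | IsWeakPW D ∧ C' ⊆ D} = C ↔ extrS C ⊆ C' :=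
  stmt17_general C hW C' hsub
end

section
/- Let X be a finite set with |X| ≥ 2. The weak patchwork closure operator satisfies the anti-exchange axiom: if C is a cluster system for X, C₁ and C₂ are two distinct non-empty subsets of X neither of which belongs to the smallest weak patchwork containing C, and C₁ belongs to the smallest weak patchwork containing C ∪ {C₂}, then C₂ does not belong to the smallest weak patchwork containing C ∪ {C₁}. -/
/-!
Every member of the weak patchwork closure of `C ∪ {Z}` either lies in the closure of `C` or
contains `Z`, because the sets of the second kind form an upper set, and a weak patchwork stays
one when an upper set is added to it. Hence `C₁` in the closure of `C ∪ {C₂}` forces `C₂ ⊆ C₁`,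
and symmetrically `C₁ ⊆ C₂`, contradicting `C₁ ≠ C₂`.
-/

section WeakPatchwork

variable {α : Type*} [DecidableEq α]

def wpClosure (S : Set (Finset α)) : Set (Finset α) :=
  ⋂₀ {D | IsWeakPW D ∧ S ⊆ D}

lemma subset_wpClosure (S : Set (Finset α)) : S ⊆ wpClosure S :=
  Set.subset_sInter fun _ hD => hD.2

lemma wpClosure_subset {S D : Set (Finset α)} (hD : IsWeakPW D) (hSD : S ⊆ D) :
    wpClosure S ⊆ D :=
  Set.sInter_subset_of_mem ⟨hD, hSD⟩

lemma isWeakPW_wpClosure (S : Set (Finset α)) : IsWeakPW (wpClosure S) :=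
  fun A hA B hB hAB =>
    Set.mem_sInter.2 fun D hD => hD.1 A (hA D hD) B (hB D hD) hAB

lemma IsWeakPW.union_of_isUpperSet {D U : Set (Finset α)} (hD : IsWeakPW D)
    (hU : IsUpperSet U) : IsWeakPW (D ∪ U) := by
  rintro A (hA | hA) B (hB | hB) hAB
  · exact Or.inl (hD A hA B hB hAB)
  · exact Or.inr (hU Finset.subset_union_right hB)
  · exact Or.inr (hU Finset.subset_union_left hA)
  · exact Or.inr (hU Finset.subset_union_left hA)

lemma wpClosure_union_singleton_subset (S : Set (Finset α)) (Z : Finset α) :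
    wpClosure (S ∪ {Z}) ⊆ wpClosure S ∪ Set.Ici Z :=
  wpClosure_subset ((isWeakPW_wpClosure S).union_of_isUpperSet (isUpperSet_Ici Z))
    (Set.union_subset_union (subset_wpClosure S) (Set.singleton_subset_iff.2 Set.self_mem_Ici))

lemma subset_of_mem_wpClosure_union_singleton {S : Set (Finset α)} {Z A : Finset α}
    (hA : A ∈ wpClosure (S ∪ {Z})) (hAS : A ∉ wpClosure S) : Z ⊆ A :=
  (wpClosure_union_singleton_subset S Z hA).resolve_left hAS

end WeakPatchwork

theorem stmt18_general {α : Type*} [DecidableEq α]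
    (C : Set (Finset α)) (C₁ C₂ : Finset α)
    (hne : C₁ ≠ C₂)
    (h1n : C₁ ∉ ⋂₀ {D : Set (Finset α) | IsWeakPW D ∧ C ⊆ D})
    (h2n : C₂ ∉ ⋂₀ {D : Set (Finset α) | IsWeakPW D ∧ C ⊆ D})
    (h12 : C₁ ∈ ⋂₀ {D : Set (Finset α) | IsWeakPW D ∧ C ∪ {C₂} ⊆ D}) :
    C₂ ∉ ⋂₀ {D : Set (Finset α) | IsWeakPW D ∧ C ∪ {C₁} ⊆ D} := fun h21 =>
  hne ((subset_of_mem_wpClosure_union_singleton h21 h2n).antisymm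
    (subset_of_mem_wpClosure_union_singleton h12 h1n))

/-- The weak patchwork closure operator satisfies the anti-exchange axiom. -/
theorem stmt18 {α : Type*} [Fintype α] [DecidableEq α] (hcard : 2 ≤ Fintype.card α)
    (C : Set (Finset α)) (hC : IsCS C) (C₁ C₂ : Finset α)
    (h1 : C₁.Nonempty) (h2 : C₂.Nonempty) (hne : C₁ ≠ C₂)
    (h1n : C₁ ∉ ⋂₀ {D : Set (Finset α) | IsWeakPW D ∧ C ⊆ D})
    (h2n : C₂ ∉ ⋂₀ {D : Set (Finset α) | IsWeakPW D ∧ C ⊆ D})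
    (h12 : C₁ ∈ ⋂₀ {D : Set (Finset α) | IsWeakPW D ∧ C ∪ {C₂} ⊆ D}) :
    C₂ ∉ ⋂₀ {D : Set (Finset α) | IsWeakPW D ∧ C ∪ {C₁} ⊆ D} :=
  stmt18_general C C₁ C₂ hne h1n h2n h12
end

section
/- Let X be a finite set with |X| ≥ 2. For every cluster system C for X, the double adjoint C** equals the union of C_triv and the smallest saturated patchwork containing C. -/
section Aux

variable {α : Type*} [DecidableEq α]

theorem compat_iff (A B : Finset α) :
    Compatible A B ↔ Disjoint A B ∨ A ⊆ B ∨ B ⊆ A := by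
  unfold Compatible
  rw [← Finset.disjoint_iff_inter_eq_empty, Finset.inter_eq_left, Finset.inter_eq_right]

theorem compat_symm {A B : Finset α} (h : Compatible A B) : Compatible B A := by
  rw [compat_iff] at h ⊢
  rcases h with h | h | h
  · exact Or.inl h.symm
  · exact Or.inr (Or.inr h)
  · exact Or.inr (Or.inl h)

theorem not_compat {A B : Finset α} (h : ¬Compatible A B) :
    (A ∩ B).Nonempty ∧ ¬A ⊆ B ∧ ¬B ⊆ A := by
  rw [compat_iff] at h
  push_neg at h
  exact ⟨Finset.not_disjoint_iff_nonempty_inter.mp h.1, h.2.1, h.2.2⟩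

theorem adj_antitone {C D : Set (Finset α)} (h : C ⊆ D) : adjS D ⊆ adjS C :=
  fun _ hA => ⟨hA.1, fun B hB => hA.2 B (h hB)⟩

theorem triv_compat {α : Type*} [Fintype α] [DecidableEq α] {A : Finset α}
    (h : A ∈ CtrivS α) (B : Finset α) : Compatible A B := by
  rcases h with ⟨x, rfl⟩ | rfl
  · by_cases hx : x ∈ B
    · exact Or.inr (Or.inl (by rw [Finset.inter_eq_left]; simpa using hx))
    · exact Or.inl (by rw [Finset.singleton_inter_of_notMem hx])
  · exact Or.inr (Or.inr (Finset.univ_inter B))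

/-- The adjoint of any cluster system is a saturated patchwork. -/
theorem adj_satPW (D : Set (Finset α)) : IsSatPW (adjS D) := by
  rintro A ⟨hAne, hA⟩ B ⟨hBne, hB⟩ hAB
  obtain ⟨hint, hAB1, hBA1⟩ := not_compat hAB
  obtain ⟨a, ha, haB⟩ := Finset.not_subset.mp hAB1
  obtain ⟨b, hb, hbA⟩ := Finset.not_subset.mp hBA1
  have key : ∀ E ∈ D, Compatible (A ∩ B) E ∧ Compatible (A ∪ B) E ∧
      Compatible (A \ B) E ∧ Compatible (B \ A) E ∧ Compatible ((A ∪ B) \ (A ∩ B)) E := by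
    intro E hE
    have h1 := (compat_iff A E).mp (hA E hE)
    have h2 := (compat_iff B E).mp (hB E hE)
    simp only [compat_iff]
    rcases h1 with d1 | s1 | s1
    · rcases h2 with d2 | s2 | s2
      · -- both disjoint from E
        have hd : Disjoint (A ∪ B) E := Finset.disjoint_union_left.mpr ⟨d1, d2⟩
        refine ⟨Or.inl ?_, Or.inl hd, Or.inl ?_, Or.inl ?_, Or.inl ?_⟩ <;>
          exact hd.mono_left (by intro x hx; simp at hx ⊢; tauto)
      · -- Disjoint A E, B ⊆ E : contradiction with A ∩ B nonempty
        exfalso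
        obtain ⟨x, hx⟩ := hint
        simp only [Finset.mem_inter] at hx
        exact Finset.disjoint_left.mp d1 hx.1 (s2 hx.2)
      · -- Disjoint A E, E ⊆ B : E ⊆ B \ A
        have hEBA : E ⊆ B \ A := by
          intro x hx
          simp only [Finset.mem_sdiff]
          exact ⟨s2 hx, Finset.disjoint_right.mp d1 hx⟩
        refine ⟨Or.inl ?_, Or.inr (Or.inr (fun x hx => Finset.mem_union_right _ (s2 hx))),
          Or.inl ?_, Or.inr (Or.inr hEBA), Or.inr (Or.inr ?_)⟩
        · exact d1.symm.mono_right Finset.inter_subset_left |>.symm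
        · exact (d1.mono_left Finset.sdiff_subset)
        · intro x hx
          have := hEBA hx
          simp only [Finset.mem_sdiff] at this
          simp only [Finset.mem_sdiff, Finset.mem_union, Finset.mem_inter]
          tauto
    · rcases h2 with d2 | s2 | s2
      · -- A ⊆ E, Disjoint B E : contradiction
        exfalso
        obtain ⟨x, hx⟩ := hint
        simp only [Finset.mem_inter] at hx
        exact Finset.disjoint_left.mp d2 hx.2 (s1 hx.1)
      · -- A ⊆ E, B ⊆ E : everything ⊆ E
        have hu : A ∪ B ⊆ E := Finset.union_subset s1 s2
        refine ⟨Or.inr (Or.inl ?_), Or.inr (Or.inl hu), Or.inr (Or.inl ?_),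
          Or.inr (Or.inl ?_), Or.inr (Or.inl ?_)⟩ <;>
          exact fun x hx => hu (by simp at hx ⊢; tauto)
      · -- A ⊆ E ⊆ B : A ⊆ B, contradiction
        exact absurd (s1.trans s2) hAB1
    · rcases h2 with d2 | s2 | s2
      · -- E ⊆ A, Disjoint B E : E ⊆ A \ B
        have hEAB : E ⊆ A \ B := by
          intro x hx
          simp only [Finset.mem_sdiff]
          exact ⟨s1 hx, Finset.disjoint_right.mp d2 hx⟩
        refine ⟨Or.inl ?_, Or.inr (Or.inr (fun x hx => Finset.mem_union_left _ (s1 hx))),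
          Or.inr (Or.inr hEAB), Or.inl ?_, Or.inr (Or.inr ?_)⟩
        · exact d2.symm.mono_right Finset.inter_subset_right |>.symm
        · exact (d2.mono_left Finset.sdiff_subset)
        · intro x hx
          have := hEAB hx
          simp only [Finset.mem_sdiff] at this
          simp only [Finset.mem_sdiff, Finset.mem_union, Finset.mem_inter]
          tauto
      · -- E ⊆ A, B ⊆ E : B ⊆ A contradiction
        exact absurd (s2.trans s1) hBA1
      · -- E ⊆ A, E ⊆ B : E ⊆ A ∩ B
        have hE : E ⊆ A ∩ B := Finset.subset_inter s1 s2
        refine ⟨Or.inr (Or.inr hE), Or.inr (Or.inr (fun x hx => Finset.mem_union_left _ (s1 hx))),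
          Or.inl ?_, Or.inl ?_, Or.inl ?_⟩
        · exact Finset.disjoint_left.mpr (fun x hx hxE => (Finset.mem_sdiff.mp hx).2 (s2 hxE))
        · exact Finset.disjoint_left.mpr (fun x hx hxE => (Finset.mem_sdiff.mp hx).2 (s1 hxE))
        · exact Finset.disjoint_left.mpr (fun x hx hxE => (Finset.mem_sdiff.mp hx).2 (hE hxE))
  refine ⟨⟨hint, fun E hE => (key E hE).1⟩,
    ⟨⟨a, Finset.mem_union_left _ ha⟩, fun E hE => (key E hE).2.1⟩,
    ⟨⟨a, Finset.mem_sdiff.mpr ⟨ha, haB⟩⟩, fun E hE => (key E hE).2.2.1⟩,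
    ⟨⟨b, Finset.mem_sdiff.mpr ⟨hb, hbA⟩⟩, fun E hE => (key E hE).2.2.2.1⟩,
    ⟨⟨a, Finset.mem_sdiff.mpr ⟨Finset.mem_union_left _ ha,
        fun h => haB (Finset.mem_inter.mp h).2⟩⟩, fun E hE => (key E hE).2.2.2.2⟩⟩

end Aux

section Fin

variable {α : Type*} [Fintype α] [DecidableEq α]

theorem exists_min_card {F : Set (Finset α)} (h : F.Nonempty) :
    ∃ M ∈ F, ∀ E ∈ F, M.card ≤ E.card :=
  Set.exists_min_image F Finset.card (Set.toFinite F) h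

theorem exists_maximal_above {F : Set (Finset α)} {E₀ : Finset α} (h : E₀ ∈ F) :
    ∃ M ∈ F, E₀ ⊆ M ∧ ∀ E ∈ F, ¬M ⊂ E := by
  obtain ⟨M, hM, hmax⟩ := Set.exists_max_image {E | E ∈ F ∧ E₀ ⊆ E} Finset.card
    (Set.toFinite _) ⟨E₀, h, Finset.Subset.refl _⟩
  exact ⟨M, hM.1, hM.2, fun E hE hlt => absurd (Finset.card_lt_card hlt)
    (not_lt.mpr (hmax E ⟨hE, hM.2.trans hlt.subset⟩))⟩

/-- Hasse-arc differences of a saturated patchwork lie in its adjoint. -/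
theorem arc_diff_adj {P : Set (Finset α)} (hP : IsSatPW P)
    {C₁ C₂ : Finset α} (h1 : C₁ ∈ P) (h2 : C₂ ∈ P) (hss : C₂ ⊂ C₁)
    (harc : ∀ E ∈ P, ¬(C₂ ⊂ E ∧ E ⊂ C₁)) : C₁ \ C₂ ∈ adjS P := by
  refine ⟨Finset.sdiff_nonempty.mpr hss.not_subset, ?_⟩
  intro E hE
  rw [compat_iff]
  by_cases hEC1 : Compatible E C₁
  · rcases (compat_iff E C₁).mp hEC1 with d | s | s
    · exact Or.inl ((d.symm.mono_left Finset.sdiff_subset))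
    · -- E ⊆ C₁
      by_cases hEC2 : Compatible E C₂
      · rcases (compat_iff E C₂).mp hEC2 with d2 | s2 | s2
        · -- Disjoint E C₂ : E ⊆ C₁ \ C₂
          exact Or.inr (Or.inr (fun x hx => Finset.mem_sdiff.mpr
            ⟨s hx, Finset.disjoint_left.mp d2 hx⟩))
        · -- E ⊆ C₂
          exact Or.inl (Finset.disjoint_left.mpr
            (fun x hx hxE => (Finset.mem_sdiff.mp hx).2 (s2 hxE)))
        · -- C₂ ⊆ E ⊆ C₁ : E = C₂ or E = C₁ by arc
          rcases eq_or_ne E C₂ with rfl | hne2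
          · exact Or.inl (Finset.disjoint_left.mpr
              (fun x hx hxE => (Finset.mem_sdiff.mp hx).2 hxE))
          rcases eq_or_ne E C₁ with rfl | hne1
          · exact Or.inr (Or.inl Finset.sdiff_subset)
          · exact absurd ⟨⟨s2, fun h => hne2 (Finset.Subset.antisymm h s2)⟩,
              ⟨s, fun h => hne1 (Finset.Subset.antisymm s h)⟩⟩ (harc E hE)
      · -- E and C₂ incompatible : E ∪ C₂ = C₁ by arc, so C₁ \ C₂ ⊆ E
        obtain ⟨_, hun, _, _, _⟩ := hP E hE C₂ h2 hEC2
        obtain ⟨_, hnsub, _⟩ := not_compat hEC2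
        have hsub1 : C₂ ⊆ E ∪ C₂ := Finset.subset_union_right
        have hsubC1 : E ∪ C₂ ⊆ C₁ := Finset.union_subset s hss.subset
        have hne : E ∪ C₂ ≠ C₂ := fun h => hnsub (by rw [← h]; exact Finset.subset_union_left)
        have heq : E ∪ C₂ = C₁ := by
          by_contra hne1
          exact harc (E ∪ C₂) hun ⟨hsub1.ssubset_of_ne hne.symm,
            hsubC1.ssubset_of_ne hne1⟩
        refine Or.inr (Or.inl (fun x hx => ?_))
        obtain ⟨hx1, hx2⟩ := Finset.mem_sdiff.mp hx
        rw [← heq] at hx1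
        rcases Finset.mem_union.mp hx1 with h | h
        · exact h
        · exact absurd h hx2
    · -- C₁ ⊆ E
      exact Or.inr (Or.inl (Finset.sdiff_subset.trans s))
  · -- E incompatible with C₁
    obtain ⟨hintP, _, _, hd2P, _⟩ := hP E hE C₁ h1 hEC1
    obtain ⟨hEint, hEns, hC1ns⟩ := not_compat hEC1
    have hE'ss : E ∩ C₁ ⊂ C₁ := by
      refine ⟨Finset.inter_subset_right, fun h => hC1ns (fun x hx => ?_)⟩
      exact (Finset.mem_inter.mp (h hx)).1
    by_cases hEC2 : Compatible (E ∩ C₁) C₂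
    · rcases (compat_iff (E ∩ C₁) C₂).mp hEC2 with d2 | s2 | s2
      · -- Disjoint (E ∩ C₁) C₂ : C₂ ⊆ C₁ \ E, arc forces C₂ = C₁ \ E
        have hsub : C₂ ⊆ C₁ \ E := by
          intro x hx
          refine Finset.mem_sdiff.mpr ⟨hss.subset hx, fun hxE => ?_⟩
          exact Finset.disjoint_right.mp d2 hx (Finset.mem_inter.mpr ⟨hxE, hss.subset hx⟩)
        have hssC : C₁ \ E ⊂ C₁ := by
          refine ⟨Finset.sdiff_subset, fun h => ?_⟩
          obtain ⟨x, hx⟩ := hEint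
          obtain ⟨hx1, hx2⟩ := Finset.mem_inter.mp hx
          exact (Finset.mem_sdiff.mp (h hx2)).2 hx1
        have heq : C₂ = C₁ \ E := by
          by_contra hne
          exact harc (C₁ \ E) hd2P ⟨⟨hsub, fun h => hne (Finset.Subset.antisymm hsub h)⟩, hssC⟩
        have : C₁ \ C₂ = E ∩ C₁ := by
          rw [heq, Finset.sdiff_sdiff_self_left, Finset.inter_comm]
        rw [this]
        exact Or.inr (Or.inl Finset.inter_subset_left)
      · -- E ∩ C₁ ⊆ C₂ : disjoint
        exact Or.inl (Finset.disjoint_left.mpr (fun x hx hxE => (Finset.mem_sdiff.mp hx).2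
          (s2 (Finset.mem_inter.mpr ⟨hxE, (Finset.mem_sdiff.mp hx).1⟩))))
      · -- C₂ ⊆ E ∩ C₁ : arc forces C₂ = E ∩ C₁, disjoint
        have heq : C₂ = E ∩ C₁ := by
          by_contra hne
          exact harc (E ∩ C₁) hintP ⟨⟨s2, fun h => hne (Finset.Subset.antisymm s2 h)⟩, hE'ss⟩
        refine Or.inl (Finset.disjoint_left.mpr (fun x hx hxE => ?_))
        obtain ⟨hx1, hx2⟩ := Finset.mem_sdiff.mp hx
        exact hx2 (heq ▸ Finset.mem_inter.mpr ⟨hxE, hx1⟩)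
    · -- (E ∩ C₁) incompatible with C₂ : union = C₁, so C₁ \ C₂ ⊆ E
      obtain ⟨_, hun, _, _, _⟩ := hP (E ∩ C₁) hintP C₂ h2 hEC2
      obtain ⟨_, hnsub, _⟩ := not_compat hEC2
      have hsub1 : C₂ ⊆ E ∩ C₁ ∪ C₂ := Finset.subset_union_right
      have hsubC1 : E ∩ C₁ ∪ C₂ ⊆ C₁ := Finset.union_subset Finset.inter_subset_right hss.subset
      have hne : E ∩ C₁ ∪ C₂ ≠ C₂ := fun h => hnsub
        (by rw [← h]; exact Finset.subset_union_left)
      have heq : E ∩ C₁ ∪ C₂ = C₁ := by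
        by_contra hne1
        exact harc (E ∩ C₁ ∪ C₂) hun ⟨hsub1.ssubset_of_ne hne.symm,
          hsubC1.ssubset_of_ne hne1⟩
      refine Or.inr (Or.inl (fun x hx => ?_))
      obtain ⟨hx1, hx2⟩ := Finset.mem_sdiff.mp hx
      rw [← heq] at hx1
      rcases Finset.mem_union.mp hx1 with h | h
      · exact (Finset.mem_inter.mp h).1
      · exact absurd h hx2

end Fin

section Key

variable {α : Type*} [Fintype α] [DecidableEq α]

/-- Key lemma: for a saturated patchwork `P` containing the trivial system,
`P** ⊆ P`. -/
theorem key_lemma {P : Set (Finset α)} (hP : IsSatPW P) (htriv : CtrivS α ⊆ P) :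
    adjS (adjS P) ⊆ P := by
  rintro A ⟨hAne, hAc⟩
  by_contra hAP
  -- least member M of P containing A
  obtain ⟨M, ⟨hMP, hAM⟩, hMmin'⟩ := exists_min_card
    (F := {E | E ∈ P ∧ A ⊆ E}) ⟨Finset.univ, htriv (Or.inr rfl), Finset.subset_univ A⟩
  have hMmin : ∀ E ∈ P, A ⊆ E → M ⊆ E := by
    intro E hEP hAE
    by_cases hc : Compatible M E
    · rcases (compat_iff M E).mp hc with hd | hs | hs
      · exfalso
        obtain ⟨a, ha⟩ := hAne
        exact (Finset.disjoint_left.mp hd (hAM ha)) (hAE ha)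
      · exact hs
      · have h1 := hMmin' E ⟨hEP, hAE⟩
        have : E = M := Finset.eq_of_subset_of_card_le hs h1
        rw [this]
    · obtain ⟨hint, _, _, _, _⟩ := hP M hMP E hEP hc
      have h1 := hMmin' (M ∩ E) ⟨hint, Finset.subset_inter hAM hAE⟩
      have : M ∩ E = M := Finset.eq_of_subset_of_card_le Finset.inter_subset_left h1
      rw [Finset.inter_eq_left] at this
      exact absurd ((compat_iff M E).mpr (Or.inr (Or.inl this))) hc
  have hAMne : A ≠ M := fun h => hAP (h ▸ hMP)
  have hAMss : A ⊂ M := hAM.ssubset_of_ne hAMne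
  -- the family 𝓕
  set F : Set (Finset α) := {E | E ∈ P ∧ E ⊂ M ∧ (E ∩ A).Nonempty} with hF
  have hsing : ∀ x ∈ A, ({x} : Finset α) ∈ F := by
    intro x hx
    refine ⟨htriv (Or.inl ⟨x, rfl⟩), ⟨Finset.singleton_subset_iff.mpr (hAM hx), ?_⟩,
      ⟨x, Finset.mem_inter.mpr ⟨Finset.mem_singleton_self x, hx⟩⟩⟩
    intro h
    apply hAMne
    have hsub : A ⊆ {x} := hAM.trans h
    rcases Finset.subset_singleton_iff.mp hsub with h1 | h1
    · exact absurd h1 (Finset.nonempty_iff_ne_empty.mp hAne)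
    · rw [h1]
      exact Finset.Subset.antisymm (h1 ▸ hAM) h
  -- every maximal member of F has its difference to M inside A
  have hbad : ∀ C ∈ F, (∀ E ∈ F, ¬C ⊂ E) → M \ C ⊆ A := by
    rintro Cm ⟨hCP, hCM, hCA⟩ hmax
    have harc : ∀ E ∈ P, ¬(Cm ⊂ E ∧ E ⊂ M) := by
      rintro E hE ⟨hh1, hh2⟩
      exact hmax E ⟨hE, hh2, hCA.mono (Finset.inter_subset_inter hh1.subset (le_refl A))⟩ hh1
    have hBadj := arc_diff_adj hP hMP hCP hCM harc
    have hc := hAc _ hBadj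
    rcases (compat_iff A (M \ Cm)).mp hc with hd | hs | hs
    · exfalso
      have hAC : A ⊆ Cm := by
        intro x hx
        by_contra hxC
        exact Finset.disjoint_left.mp hd hx (Finset.mem_sdiff.mpr ⟨hAM hx, hxC⟩)
      exact hCM.2 (hMmin Cm hCP hAC)
    · exfalso
      obtain ⟨x, hx⟩ := hCA
      obtain ⟨hx1, hx2⟩ := Finset.mem_inter.mp hx
      exact (Finset.mem_sdiff.mp (hs hx2)).2 hx1
    · exact hs
  -- the family 𝓖
  set G : Set (Finset α) :=
    {K | K ∈ P ∧ K ⊂ M ∧ (K ∩ A).Nonempty ∧ M \ K ⊆ A ∧ M \ K ∈ P} with hG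
  -- combining two "bad" sets
  have mkG : ∀ K L : Finset α, K ∈ P → L ∈ P → K ⊂ M → L ⊂ M →
      M \ K ⊆ A → M \ L ⊆ A → ¬K ⊆ L → ¬L ⊆ K →
      (K ∪ L ∈ P → K ∪ L = M) → K ∩ L ∈ G ∧ K ∩ L ⊂ K := by
    intro K L hK hL hKM hLM hdK hdL hKL hLK hU
    have hMsplit : ∀ x ∈ M, x ∉ K ∩ L → x ∈ A := by
      intro x hxM hxKL
      rw [Finset.mem_inter] at hxKL
      push_neg at hxKL
      by_cases hxK : x ∈ K
      · exact hdL (Finset.mem_sdiff.mpr ⟨hxM, hxKL hxK⟩)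
      · exact hdK (Finset.mem_sdiff.mpr ⟨hxM, hxK⟩)
    have hint : (K ∩ L).Nonempty := by
      rw [Finset.nonempty_iff_ne_empty]
      intro hemp
      apply hAP
      have : A = M := Finset.Subset.antisymm hAM
        (fun x hx => hMsplit x hx (by rw [hemp]; exact Finset.notMem_empty x))
      rw [this]; exact hMP
    have hnc : ¬Compatible K L := by
      rw [compat_iff]
      push_neg
      exact ⟨Finset.not_disjoint_iff_nonempty_inter.mpr hint, hKL, hLK⟩
    obtain ⟨hKLint, hKLun, _, _, hΔ⟩ := hP K hK L hL hnc
    have hM : K ∪ L = M := hU hKLun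
    rw [hM] at hΔ
    have hdiff : M \ (K ∩ L) ⊆ A := fun x hx => by
      obtain ⟨hx1, hx2⟩ := Finset.mem_sdiff.mp hx
      exact hMsplit x hx1 hx2
    have hKLA : (K ∩ L ∩ A).Nonempty := by
      rw [Finset.nonempty_iff_ne_empty]
      intro hemp
      apply hAP
      have : A = M \ (K ∩ L) := by
        refine Finset.Subset.antisymm (fun x hx => Finset.mem_sdiff.mpr ⟨hAM hx, fun hk => ?_⟩)
          hdiff
        have : x ∈ K ∩ L ∩ A := Finset.mem_inter.mpr ⟨hk, hx⟩
        rw [hemp] at this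
        exact Finset.notMem_empty x this
      rw [this]; exact hΔ
    refine ⟨⟨hKLint, Finset.inter_subset_left.trans_ssubset hKM, hKLA, hdiff, hΔ⟩,
      Finset.inter_subset_left.ssubset_of_ne (fun h => hKL (by rw [← h]; exact Finset.inter_subset_right))⟩
  -- Step 1 : G is nonempty
  have hGne : G.Nonempty := by
    obtain ⟨a, ha⟩ := hAne
    obtain ⟨C₂, hC₂F, _, hmax2⟩ := exists_maximal_above (hsing a ha)
    have hd2 : M \ C₂ ⊆ A := hbad C₂ hC₂F hmax2
    obtain ⟨b, hb⟩ := Finset.sdiff_nonempty.mpr hC₂F.2.1.2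
    obtain ⟨hbM, hbC₂⟩ := Finset.mem_sdiff.mp hb
    have hbA : b ∈ A := hd2 hb
    obtain ⟨C₃, hC₃F, hbC₃, hmax3⟩ := exists_maximal_above (hsing b hbA)
    have hd3 : M \ C₃ ⊆ A := hbad C₃ hC₃F hmax3
    have hbC₃' : b ∈ C₃ := hbC₃ (Finset.mem_singleton_self b)
    have h32 : ¬C₃ ⊆ C₂ := fun h => hbC₂ (h hbC₃')
    have h23 : ¬C₂ ⊆ C₃ := by
      intro h
      exact hmax2 C₃ hC₃F (h.ssubset_of_ne (fun he => h32 (he ▸ Finset.Subset.refl C₂)))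
    have hU : C₂ ∪ C₃ ∈ P → C₂ ∪ C₃ = M := by
      intro hunP
      by_contra hne
      have hss : C₂ ∪ C₃ ⊂ M :=
        (Finset.union_subset hC₂F.2.1.subset hC₃F.2.1.subset).ssubset_of_ne hne
      refine hmax2 (C₂ ∪ C₃) ⟨hunP, hss,
        hC₂F.2.2.mono (Finset.inter_subset_inter Finset.subset_union_left (le_refl A))⟩ ?_
      exact Finset.subset_union_left.ssubset_of_ne
        (fun h => h32 (by rw [h]; exact Finset.subset_union_right))
    obtain ⟨hKG, _⟩ := mkG C₂ C₃ hC₂F.1 hC₃F.1 hC₂F.2.1 hC₃F.2.1 hd2 hd3 h23 h32 hU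
    exact ⟨_, hKG⟩
  -- Step 2 : descent inside G
  have hstep : ∀ K ∈ G, ∃ K' ∈ G, K' ⊂ K := by
    rintro K ⟨hKP, hKM, hKA, hdKA, hdKP⟩
    have hMKne : (M \ K).Nonempty := Finset.sdiff_nonempty.mpr hKM.2
    have hMKF : M \ K ∈ F := by
      refine ⟨hdKP, ⟨Finset.sdiff_subset, fun h => ?_⟩, ?_⟩
      · obtain ⟨x, hx⟩ := hKA
        obtain ⟨hx1, hx2⟩ := Finset.mem_inter.mp hx
        exact (Finset.mem_sdiff.mp (h (hKM.subset hx1))).2 hx1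
      · obtain ⟨x, hx⟩ := hMKne
        exact ⟨x, Finset.mem_inter.mpr ⟨hx, hdKA hx⟩⟩
    obtain ⟨C₅, hC₅F, hsub₅, hmax₅⟩ := exists_maximal_above hMKF
    have hd5 : M \ C₅ ⊆ A := hbad C₅ hC₅F hmax₅
    have hK5 : ¬K ⊆ C₅ := by
      intro h
      apply hC₅F.2.1.2
      intro x hx
      by_cases hxK : x ∈ K
      · exact h hxK
      · exact hsub₅ (Finset.mem_sdiff.mpr ⟨hx, hxK⟩)
    have h5K : ¬C₅ ⊆ K := by
      obtain ⟨x, hx⟩ := hMKne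
      exact fun h => (Finset.mem_sdiff.mp hx).2 (h (hsub₅ hx))
    have hU : K ∪ C₅ ∈ P → K ∪ C₅ = M := by
      intro _
      refine Finset.Subset.antisymm (Finset.union_subset hKM.subset hC₅F.2.1.subset) ?_
      intro x hx
      by_cases hxK : x ∈ K
      · exact Finset.mem_union_left _ hxK
      · exact Finset.mem_union_right _ (hsub₅ (Finset.mem_sdiff.mpr ⟨hx, hxK⟩))
    obtain ⟨hKG, hss⟩ := mkG K C₅ hKP hC₅F.1 hKM hC₅F.2.1 hdKA hd5 hK5 h5K hU
    exact ⟨_, hKG, hss⟩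
  -- contradiction by minimality
  obtain ⟨K₀, hK₀, hK₀min⟩ := exists_min_card hGne
  obtain ⟨K', hK', hss⟩ := hstep K₀ hK₀
  exact absurd (hK₀min K' hK') (not_le.mpr (Finset.card_lt_card hss))

end Key

/-- For every cluster system `C`, the double adjoint `C**` is the union of `C_triv`
and the smallest saturated patchwork containing `C`. -/
theorem stmt19 {α : Type*} [Fintype α] [DecidableEq α] (hcard : 2 ≤ Fintype.card α)
    (C : Set (Finset α)) (hC : IsCS C) :
    adjS (adjS C) = CtrivS α ∪ ⋂₀ {D : Set (Finset α) | IsSatPW D ∧ C ⊆ D} := by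
  have hα : Nonempty α := Fintype.card_pos_iff.mp (by omega)
  apply Set.Subset.antisymm
  · intro A hA
    by_cases ht : A ∈ CtrivS α
    · exact Or.inl ht
    refine Or.inr ?_
    rintro D ⟨hDsat, hCD⟩
    have hPsat : IsSatPW (CtrivS α ∪ D) := by
      rintro X hX Y hY hnc
      have hXD : X ∈ D := by
        rcases hX with hX | hX
        · exact absurd (triv_compat hX Y) hnc
        · exact hX
      have hYD : Y ∈ D := by
        rcases hY with hY | hY
        · exact absurd (compat_symm (triv_compat hY X)) hnc
        · exact hY
      obtain ⟨h1, h2, h3, h4, h5⟩ := hDsat X hXD Y hYD hnc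
      exact ⟨Or.inr h1, Or.inr h2, Or.inr h3, Or.inr h4, Or.inr h5⟩
    have hsub : adjS (adjS C) ⊆ adjS (adjS (CtrivS α ∪ D)) :=
      adj_antitone (adj_antitone (fun x hx => Or.inr (hCD hx)))
    rcases key_lemma hPsat (fun x hx => Or.inl hx) (hsub hA) with h | h
    · exact absurd h ht
    · exact h
  · rintro A (hA | hA)
    · refine ⟨?_, fun B _ => triv_compat hA B⟩
      rcases hA with ⟨x, rfl⟩ | rfl
      · exact ⟨x, Finset.mem_singleton_self x⟩
      · exact Finset.univ_nonempty
    · exact hA _ ⟨adj_satPW _,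
        fun X hX => ⟨hC X hX, fun B hB => compat_symm (hB.2 X hX)⟩⟩
end
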